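/- arXiv:1304.0026 — 6 statements merged into one kernel-verified Lean document; each statement's English description precedes it below -/
import Mathlib

section
/- Let π = (π_1, ..., π_ℓ) be a partition with ℓ parts. The number of permutations (linear orderings) of the multiset consisting of, for each i, 2π_i + 1 distinguishable symbols of kind i, such that for each i the symbols of kind i appear in comb-like order, equals (2|π| + ℓ)! / ∏_{i=1}^{ℓ} (2π_i + 1)!!, where |π| = π_1 + ... + π_ℓ. -/
open Finset

/-- The odd double factorial `(2k+1)!! = 1·3·5···(2k+1)`. -/
def oddDoubleFactorial (k : ℕ) : ℕ := ∏ j ∈ Finset.range (k + 1), (2 * j + 1)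

/-- An arrangement of all the symbols, i.e. a bijection from the set of symbols
(with `2 * π i + 1` symbols of kind `i`) to the set of positions,
has the symbols of kind `i` in comb-like order if the positions of
`i_1, i_3, …, i_{2π_i+1}` increase and the position of `i_{2j}` precedes that of
`i_{2j+1}` for each `j` (0-based indexing is used). -/
def kindsCombLike {ℓ : ℕ} (π : Fin ℓ → ℕ)
    (f : (Σ i : Fin ℓ, Fin (2 * π i + 1)) ≃ Fin (∑ i, (2 * π i + 1))) : Prop :=
  ∀ i : Fin ℓ,
    (∀ j : Fin (π i), f ⟨i, ⟨2 * j.1, by have := j.2; omega⟩⟩ <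
        f ⟨i, ⟨2 * j.1 + 2, by have := j.2; omega⟩⟩) ∧
    (∀ j : Fin (π i), f ⟨i, ⟨2 * j.1 + 1, by have := j.2; omega⟩⟩ <
        f ⟨i, ⟨2 * j.1 + 2, by have := j.2; omega⟩⟩)

instance {ℓ : ℕ} (π : Fin ℓ → ℕ) : DecidablePred (kindsCombLike π) := fun _ => by
  unfold kindsCombLike; infer_instance

/-!
Every arrangement factors uniquely as a permutation inside each kind followed by an arrangement
that is increasing on each kind, and the comb condition only sees the permutations inside the
kinds. With `M` the number of kindwise increasing arrangements and `c n` the number of comb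
permutations of `Fin n`, the comb arrangements therefore number `M * ∏ c (2π_i + 1)`, while all
arrangements number `(2|π| + ℓ)! = M * ∏ (2π_i + 1)!`. It remains to see
`c (2k + 1) * (2k + 1)!! = (2k + 1)!`: in a comb on `2k + 3` symbols the top symbol sits at the
last position, the one before it at any of the other `2k + 2`, and the rest form a comb, so
`c (2k + 3) = (2k + 2) * c (2k + 1)`.
-/

open Equiv

section Comb

variable {β : Type*}

/-- For `n = 2k + 1` these are the relations of `kindsCombLike`; even `n` only occurs in the
recursion counting combs. -/
def IsComb [LT β] {n : ℕ} (g : Fin n → β) : Prop :=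
  ∀ j (h : 2 * j + 2 < n),
    g ⟨2 * j, by omega⟩ < g ⟨2 * j + 2, h⟩ ∧ g ⟨2 * j + 1, by omega⟩ < g ⟨2 * j + 2, h⟩

theorem isComb_comp_iff [LinearOrder β] {γ : Type*} [Preorder γ] {m : β → γ}
    (hm : StrictMono m) {n : ℕ} {g : Fin n → β} : IsComb (m ∘ g) ↔ IsComb g := by
  simp only [IsComb, Function.comp_apply, hm.lt_iff_lt]

variable [Preorder β] {n : ℕ}

theorem IsComb.le_apply_two_mul {g : Fin n → β} (hg : IsComb g) {j : ℕ} (hj : 2 * j < n)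
    {x : Fin n} (hx : x.1 ≤ 2 * j) : g x ≤ g ⟨2 * j, hj⟩ := by
  induction j with
  | zero => exact le_of_eq (congrArg g (Fin.ext (by show x.1 = 2 * 0; omega)))
  | succ j ih =>
    obtain ⟨h0, h1⟩ := hg j (by omega)
    rcases (show x.1 ≤ 2 * j ∨ x.1 = 2 * j + 1 ∨ x.1 = 2 * j + 2 by omega) with hx | hx | hx
    · exact (ih (by omega) hx).trans h0.le
    · exact (congrArg g (Fin.ext hx)).trans_lt h1 |>.le
    · exact le_of_eq (congrArg g (Fin.ext hx))

theorem IsComb.comp_castSucc {g : Fin (n + 1) → β} (hg : IsComb g) :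
    IsComb (g ∘ Fin.castSucc) :=
  fun j h => hg j (by omega)

theorem isComb_iff_comp_castSucc {k : ℕ} {g : Fin (2 * k + 1 + 1) → β} :
    IsComb g ↔ IsComb (g ∘ Fin.castSucc) :=
  ⟨IsComb.comp_castSucc, fun hg j h => hg j (by omega)⟩

theorem isComb_iff_comp_castSucc_and_lt_last {k : ℕ} {g : Fin (2 * k + 2 + 1) → β} :
    IsComb g ↔
      IsComb (g ∘ Fin.castSucc) ∧ ∀ x : Fin (2 * k + 2), g x.castSucc < g (Fin.last _) := by
  constructor
  · intro hg
    obtain ⟨h0, h1⟩ := hg k (by omega)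
    refine ⟨hg.comp_castSucc, fun x => ?_⟩
    rcases (show x.1 ≤ 2 * k ∨ x.1 = 2 * k + 1 by omega) with hx | hx
    · exact (hg.le_apply_two_mul (by omega) hx).trans_lt h0
    · exact (congrArg g (Fin.ext hx)).trans_lt h1
  · rintro ⟨hg, hlast⟩ j h
    rcases (show j < k ∨ j = k by omega) with hj | rfl
    · exact hg j (by omega)
    · exact ⟨hlast ⟨2 * j, by omega⟩, hlast ⟨2 * j + 1, by omega⟩⟩

end Comb

section PermSnoc

variable {n : ℕ}

noncomputable def permSnoc (a : Fin (n + 1)) (ρ : Perm (Fin n)) : Perm (Fin (n + 1)) :=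
  Equiv.ofBijective (Fin.snoc (a.succAbove ∘ ρ) a) <| Finite.injective_iff_bijective.1 <|
    Fin.snoc_injective_of_injective (Fin.succAbove_right_injective.comp ρ.injective)
      fun ⟨_, hx⟩ => Fin.succAbove_ne a _ hx

@[simp]
theorem permSnoc_last (a : Fin (n + 1)) (ρ : Perm (Fin n)) : permSnoc a ρ (Fin.last n) = a :=
  Fin.snoc_last (α := fun _ => Fin (n + 1)) _ _

@[simp]
theorem permSnoc_castSucc (a : Fin (n + 1)) (ρ : Perm (Fin n)) (x : Fin n) :
    permSnoc a ρ x.castSucc = a.succAbove (ρ x) :=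
  Fin.snoc_castSucc (α := fun _ => Fin (n + 1)) _ _ x

theorem permSnoc_comp_castSucc (a : Fin (n + 1)) (ρ : Perm (Fin n)) :
    permSnoc a ρ ∘ Fin.castSucc = a.succAbove ∘ ρ :=
  funext (permSnoc_castSucc a ρ)

theorem permSnoc_injective2 : Function.Injective2 (permSnoc (n := n)) := by
  intro a a' ρ ρ' h
  have ha : a = a' := by simpa using congr($h (Fin.last n))
  subst ha
  refine ⟨rfl, Equiv.ext fun x => Fin.succAbove_right_injective (p := a) ?_⟩
  have h' := congr($h ∘ Fin.castSucc)
  rw [permSnoc_comp_castSucc, permSnoc_comp_castSucc] at h'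
  exact congr_fun h' x

noncomputable def permSnocEquiv : Fin (n + 1) × Perm (Fin n) ≃ Perm (Fin (n + 1)) :=
  Equiv.ofBijective (fun p => permSnoc p.1 p.2) <|
    (Fintype.bijective_iff_injective_and_card _).2
      ⟨fun _ _ h => Prod.ext_iff.2 (permSnoc_injective2 h), by
        simp [Fintype.card_perm, Nat.factorial_succ]⟩

theorem Fin.forall_succAbove_lt_iff {a : Fin (n + 1)} :
    (∀ y : Fin n, a.succAbove y < a) ↔ a = Fin.last n := by
  refine ⟨fun h => ?_, fun h y => h ▸ (Fin.succAbove_last (n := n) ▸ Fin.castSucc_lt_last y)⟩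
  by_contra ha
  obtain ⟨b, rfl⟩ := Fin.exists_castSucc_eq.2 ha
  exact lt_irrefl _ ((Fin.succAbove_lt_iff_castSucc_lt _ _).1 (h b))

end PermSnoc

noncomputable def combCount (n : ℕ) : ℕ := Nat.card {τ : Perm (Fin n) // IsComb τ}

theorem combCount_succ {n : ℕ} (p : Fin (n + 1) → Prop)
    (hp : ∀ a ρ, IsComb (permSnoc a ρ) ↔ p a ∧ IsComb ρ) :
    combCount (n + 1) = Nat.card {a // p a} * combCount n := by
  have e : {x : Fin (n + 1) × Perm (Fin n) // IsComb (permSnoc x.1 x.2)} ≃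
      {a // p a} × {ρ : Perm (Fin n) // IsComb ρ} :=
    (subtypeEquivRight (q := fun x => p x.1 ∧ IsComb x.2) fun x => hp x.1 x.2).trans
      (subtypeProdEquivProd (q := fun ρ : Perm (Fin n) => IsComb ρ))
  calc combCount (n + 1)
      = Nat.card {x : Fin (n + 1) × Perm (Fin n) // IsComb (permSnoc x.1 x.2)} :=
        (Nat.card_congr (permSnocEquiv.subtypeEquiv fun _ => Iff.rfl)).symm
    _ = Nat.card {a // p a} * combCount n := (Nat.card_congr e).trans (Nat.card_prod _ _)

theorem combCount_two_mul_add_two (k : ℕ) :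
    combCount (2 * k + 2) = (2 * k + 2) * combCount (2 * k + 1) := by
  rw [combCount_succ (fun _ => True), Nat.card_congr (subtypeUnivEquiv fun _ => trivial),
    Nat.card_fin]
  intro a ρ
  rw [isComb_iff_comp_castSucc, permSnoc_comp_castSucc,
    isComb_comp_iff (Fin.strictMono_succAbove a), true_and]

theorem combCount_two_mul_add_three (k : ℕ) : combCount (2 * k + 3) = combCount (2 * k + 2) := by
  rw [combCount_succ (· = Fin.last _), Nat.card_unique, one_mul]
  intro a ρ
  rw [isComb_iff_comp_castSucc_and_lt_last, permSnoc_comp_castSucc,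
    isComb_comp_iff (Fin.strictMono_succAbove a), permSnoc_last, and_comm]
  simp only [permSnoc_castSucc]
  exact and_congr_left' (ρ.forall_congr_right.trans Fin.forall_succAbove_lt_iff)

theorem combCount_mul_oddDoubleFactorial (k : ℕ) :
    combCount (2 * k + 1) * oddDoubleFactorial k = (2 * k + 1).factorial := by
  induction k with
  | zero =>
    rw [combCount, Nat.card_congr (Equiv.subtypeUnivEquiv (p := fun τ : Perm (Fin 1) => IsComb τ)
      fun _ _ h => absurd h (by omega))]
    simp [oddDoubleFactorial]
  | succ k ih =>
    rw [show 2 * (k + 1) + 1 = 2 * k + 3 by ring, combCount_two_mul_add_three,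
      combCount_two_mul_add_two, oddDoubleFactorial, Finset.prod_range_succ, ← oddDoubleFactorial,
      Nat.factorial_succ, Nat.factorial_succ, ← ih]
    ring

theorem Tuple.sort_strictMono_comp {β : Type*} [LinearOrder β] {k : ℕ} {g : Fin k → β}
    (hg : StrictMono g) (σ : Perm (Fin k)) : Tuple.sort (g ∘ σ) = σ⁻¹ := by
  refine (Tuple.eq_sort_iff.2 ⟨?_, fun i j hij h => ?_⟩).symm
  · simpa [Function.comp_assoc] using hg.monotone
  · exact absurd (hg.injective (by simpa using h)) hij.ne

section Arrangement

variable {ι : Type*} {n : ι → ℕ} {β : Type*} [LinearOrder β]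

def KindwiseStrictMono (m : (Σ i, Fin (n i)) ≃ β) : Prop :=
  ∀ i, StrictMono fun j => m ⟨i, j⟩

noncomputable def arrangementEquiv :
    (∀ i, Perm (Fin (n i))) × {m : (Σ i, Fin (n i)) ≃ β // KindwiseStrictMono m} ≃
      ((Σ i, Fin (n i)) ≃ β) where
  toFun p := (sigmaCongrRight p.1).trans p.2.1
  invFun f :=
    (fun i => (Tuple.sort fun j => f ⟨i, j⟩)⁻¹,
      ⟨(sigmaCongrRight fun i => Tuple.sort fun j => f ⟨i, j⟩).trans f, fun i =>
        (Tuple.monotone_sort fun j => f ⟨i, j⟩).strictMono_of_injective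
          (f.injective.comp (sigma_mk_injective.comp (Tuple.sort _).injective))⟩)
  left_inv := by
    rintro ⟨σ, m, hm⟩
    have hsort (i) : Tuple.sort (fun j => ((sigmaCongrRight σ).trans m) ⟨i, j⟩) = (σ i)⁻¹ :=
      Tuple.sort_strictMono_comp (hm i) (σ i)
    simp only [hsort, inv_inv]
    congr 2
    ext ⟨i, j⟩
    simp
  right_inv f := by
    ext ⟨i, j⟩
    simp

variable [Fintype ι]

theorem Nat.card_subtype_forall_fst {A : ι → Type*} {B : Type*} (P : ∀ i, A i → Prop) :
    Nat.card {x : (∀ i, A i) × B // ∀ i, P i (x.1 i)} =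
      (∏ i, Nat.card {a // P i a}) * Nat.card B := by
  calc _ = Nat.card ({a : ∀ i, A i // ∀ i, P i (a i)} × B) :=
        Nat.card_congr prodSubtypeFstEquivSubtypeProd
    _ = _ := by rw [Nat.card_prod, Nat.card_congr subtypePiEquivPi, Nat.card_pi]

theorem card_arrangements :
    Nat.card ((Σ i, Fin (n i)) ≃ β) =
      (∏ i, (n i).factorial) * Nat.card {m : (Σ i, Fin (n i)) ≃ β // KindwiseStrictMono m} := by
  rw [← Nat.card_congr arrangementEquiv, Nat.card_prod, Nat.card_pi]
  simp [Fintype.card_perm]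

theorem card_arrangements_isComb :
    Nat.card {f : (Σ i, Fin (n i)) ≃ β // ∀ i, IsComb fun j => f ⟨i, j⟩} =
      (∏ i, combCount (n i)) * Nat.card {m : (Σ i, Fin (n i)) ≃ β // KindwiseStrictMono m} := by
  simp only [combCount]
  rw [← Nat.card_subtype_forall_fst fun i (σ : Perm (Fin (n i))) => IsComb σ]
  exact Nat.card_congr (arrangementEquiv.subtypeEquiv fun p =>
    forall_congr' fun i => (isComb_comp_iff (p.2.2 i)).symm).symm

end Arrangement

theorem kindsCombLike_iff {ℓ : ℕ} (π : Fin ℓ → ℕ)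
    (f : (Σ i : Fin ℓ, Fin (2 * π i + 1)) ≃ Fin (∑ i, (2 * π i + 1))) :
    kindsCombLike π f ↔ ∀ i, IsComb fun j => f ⟨i, j⟩ :=
  forall_congr' fun _ =>
    ⟨fun h j _ => ⟨h.1 ⟨j, by omega⟩, h.2 ⟨j, by omega⟩⟩,
      fun h => ⟨fun j => (h j (by omega)).1, fun j => (h j (by omega)).2⟩⟩

theorem number_of_arrangements_with_combs_general {ℓ : ℕ} (π : Fin ℓ → ℕ) :
    (Finset.univ.filter (kindsCombLike π)).card * ∏ i, oddDoubleFactorial (π i) =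
      Nat.factorial (2 * (∑ i, π i) + ℓ) := by
  set M := Nat.card {m : (Σ i : Fin ℓ, Fin (2 * π i + 1)) ≃ Fin (∑ i, (2 * π i + 1)) //
    KindwiseStrictMono m}
  have hcombs :
      (Finset.univ.filter (kindsCombLike π)).card = (∏ i, combCount (2 * π i + 1)) * M := by
    rw [← Fintype.card_subtype, ← Nat.card_eq_fintype_card, ← card_arrangements_isComb]
    simp_rw [kindsCombLike_iff]
  have hsize : 2 * (∑ i, π i) + ℓ = ∑ i, (2 * π i + 1) := by
    simp [Finset.sum_add_distrib, Finset.mul_sum]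
  calc _ = (∏ i, combCount (2 * π i + 1) * oddDoubleFactorial (π i)) * M := by
        rw [hcombs, Finset.prod_mul_distrib]; ring
    _ = (∏ i, (2 * π i + 1).factorial) * M := by simp_rw [combCount_mul_oddDoubleFactorial]
    _ = Nat.card ((Σ i, Fin (2 * π i + 1)) ≃ Fin (∑ i, (2 * π i + 1))) := card_arrangements.symm
    _ = _ := by
        rw [Nat.card_eq_fintype_card, Fintype.card_equiv (Fintype.equivFinOfCardEq (by simp)),
          hsize]
        simp

/-- for a partition `π` with `ℓ` parts, the number of permutations of the
multiset of `2π_i + 1` symbols of kind `i` (for each `i`) in which the symbols of each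
kind appear in comb-like order equals `(2|π| + ℓ)! / ∏ i (2π_i + 1)!!`. -/
theorem number_of_arrangements_with_combs {ℓ : ℕ} (π : Fin ℓ → ℕ)
    (hπ : ∀ i, 0 < π i) :
    (Finset.univ.filter (kindsCombLike π)).card * ∏ i, oddDoubleFactorial (π i) =
      Nat.factorial (2 * (∑ i, π i) + ℓ) :=
  number_of_arrangements_with_combs_general π
end

section
/- For finite sets A and B, the set partitions R of A ⊔ B are in bijection with pairs (P, Q), where P is a set partition of B and Q is a set partition of A ⊔ P in which every element of P lies in a singleton-intersecting block; the bijection replaces each block-label of P in Q by the elements of that block. -/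
/-- A set partition of a type `α`: a collection of nonempty pairwise disjoint subsets
covering `α`. -/
structure SetPartition (α : Type*) where
  blocks : Set (Set α)
  nonempty_blocks : ∀ b ∈ blocks, b.Nonempty
  pairwise_disjoint : ∀ b ∈ blocks, ∀ c ∈ blocks, b ≠ c → Disjoint b c
  cover : ∀ x : α, ∃ b ∈ blocks, x ∈ b

/-- `Q` separates the blocks of `P` if no two (labels of) blocks of `P` lie in
the same block of `Q`. -/
def SeparatesLabels {A B : Type*} (P : SetPartition B)
    (Q : SetPartition (A ⊕ {s : Set B // s ∈ P.blocks})) : Prop :=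
  ∀ q ∈ Q.blocks, ∀ p p' : {s : Set B // s ∈ P.blocks},
    Sum.inr p ∈ q → Sum.inr p' ∈ q → p = p'

/-- Replace each block-label `p` of `P` occurring in a set `q` by the elements of the
subset `p ⊆ B`, obtaining a subset of `A ⊕ B`. -/
def expandBlock {A B : Type*} (P : SetPartition B)
    (q : Set (A ⊕ {s : Set B // s ∈ P.blocks})) : Set (A ⊕ B) :=
  {x | (∃ a : A, x = Sum.inl a ∧ Sum.inl a ∈ q) ∨
       (∃ (b : B) (p : {s : Set B // s ∈ P.blocks}),
          x = Sum.inr b ∧ Sum.inr p ∈ q ∧ b ∈ p.1)}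

namespace SPAux

variable {A B : Type*}

lemma SetPartition.ext' {α : Type*} {P Q : SetPartition α} (h : P.blocks = Q.blocks) :
    P = Q := by
  cases P; cases Q; simp_all

lemma mem_expand_inl (P : SetPartition B) (q : Set (A ⊕ {s : Set B // s ∈ P.blocks})) (a : A) :
    Sum.inl a ∈ expandBlock P q ↔ Sum.inl a ∈ q := by
  simp [expandBlock]

lemma mem_expand_inr (P : SetPartition B) (q : Set (A ⊕ {s : Set B // s ∈ P.blocks})) (b : B) :
    Sum.inr b ∈ expandBlock P q ↔
      ∃ p : {s : Set B // s ∈ P.blocks}, Sum.inr p ∈ q ∧ b ∈ p.1 := by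
  simp [expandBlock]

/-- If `b ∈ p` and `inr b` lies in the expansion of `q`, then the label of `p` is in `q`. -/
lemma inr_mem_of_expand (P : SetPartition B) (q : Set (A ⊕ {s : Set B // s ∈ P.blocks}))
    (p : {s : Set B // s ∈ P.blocks}) {b : B} (hb : b ∈ p.1)
    (h : Sum.inr b ∈ expandBlock P q) : Sum.inr p ∈ q := by
  obtain ⟨p', hp', hb'⟩ := (mem_expand_inr P q b).1 h
  have hpp : p = p' := by
    by_contra hne
    have hne' : p.1 ≠ p'.1 := fun h => hne (Subtype.ext h)
    exact Set.disjoint_left.1 (P.pairwise_disjoint p.1 p.2 p'.1 p'.2 hne') hb hb'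
  exact hpp ▸ hp'

lemma expand_inj (P : SetPartition B) :
    Function.Injective (expandBlock (A := A) P) := by
  intro q q' h
  ext x
  cases x with
  | inl a =>
    rw [← mem_expand_inl P q a, ← mem_expand_inl P q' a, h]
  | inr p =>
    obtain ⟨b, hb⟩ := P.nonempty_blocks p.1 p.2
    constructor
    · intro hq
      exact inr_mem_of_expand P q' p hb (h ▸ (mem_expand_inr P q b).2 ⟨p, hq, hb⟩)
    · intro hq
      exact inr_mem_of_expand P q p hb (h ▸ (mem_expand_inr P q' b).2 ⟨p, hq, hb⟩)

/-- The forward map. -/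
def fwd (P : SetPartition B) (Q : SetPartition (A ⊕ {s : Set B // s ∈ P.blocks})) :
    SetPartition (A ⊕ B) where
  blocks := expandBlock P '' Q.blocks
  nonempty_blocks := by
    rintro _ ⟨q, hq, rfl⟩
    obtain ⟨x, hx⟩ := Q.nonempty_blocks q hq
    cases x with
    | inl a => exact ⟨Sum.inl a, (mem_expand_inl P q a).2 hx⟩
    | inr p =>
      obtain ⟨b, hb⟩ := P.nonempty_blocks p.1 p.2
      exact ⟨Sum.inr b, (mem_expand_inr P q b).2 ⟨p, hx, hb⟩⟩
  pairwise_disjoint := by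
    rintro _ ⟨q, hq, rfl⟩ _ ⟨q', hq', rfl⟩ hne
    have hqq : q ≠ q' := fun h => hne (by rw [h])
    have hd := Q.pairwise_disjoint q hq q' hq' hqq
    rw [Set.disjoint_left]
    intro x hx hx'
    cases x with
    | inl a =>
      exact Set.disjoint_left.1 hd ((mem_expand_inl P q a).1 hx)
        ((mem_expand_inl P q' a).1 hx')
    | inr b =>
      obtain ⟨p, hp, hb⟩ := (mem_expand_inr P q b).1 hx
      exact Set.disjoint_left.1 hd hp (inr_mem_of_expand P q' p hb hx')
  cover := by
    intro x
    cases x with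
    | inl a =>
      obtain ⟨q, hq, hx⟩ := Q.cover (Sum.inl a)
      exact ⟨_, ⟨q, hq, rfl⟩, (mem_expand_inl P q a).2 hx⟩
    | inr b =>
      obtain ⟨p, hp, hb⟩ := P.cover b
      obtain ⟨q, hq, hx⟩ := Q.cover (Sum.inr ⟨p, hp⟩)
      exact ⟨_, ⟨q, hq, rfl⟩, (mem_expand_inr P q b).2 ⟨⟨p, hp⟩, hx, hb⟩⟩

/-- The partition of `B` induced by a partition of `A ⊕ B`. -/
def Pof (R : SetPartition (A ⊕ B)) : SetPartition B where
  blocks := {s | s.Nonempty ∧ ∃ r ∈ R.blocks, s = Sum.inr ⁻¹' r}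
  nonempty_blocks := fun _ hs => hs.1
  pairwise_disjoint := by
    rintro s ⟨_, r, hr, rfl⟩ s' ⟨_, r', hr', rfl⟩ hne
    have hrr : r ≠ r' := fun h => hne (by rw [h])
    exact Set.disjoint_left.2 fun b hb hb' =>
      Set.disjoint_left.1 (R.pairwise_disjoint r hr r' hr' hrr) hb hb'
  cover := by
    intro b
    obtain ⟨r, hr, hb⟩ := R.cover (Sum.inr b)
    exact ⟨Sum.inr ⁻¹' r, ⟨⟨b, hb⟩, r, hr, rfl⟩, hb⟩

/-- Contract a block of a partition of `A ⊕ B` to a block over `A ⊕ labels`. -/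
def contract (R : SetPartition (A ⊕ B)) (r : Set (A ⊕ B)) :
    Set (A ⊕ {s : Set B // s ∈ (Pof R).blocks}) :=
  {x | (∃ a : A, x = Sum.inl a ∧ Sum.inl a ∈ r) ∨
       (∃ p : {s : Set B // s ∈ (Pof R).blocks}, x = Sum.inr p ∧ p.1 = Sum.inr ⁻¹' r)}

lemma mem_contract_inl (R : SetPartition (A ⊕ B)) (r : Set (A ⊕ B)) (a : A) :
    Sum.inl a ∈ contract R r ↔ Sum.inl a ∈ r := by
  simp [contract]

lemma mem_contract_inr (R : SetPartition (A ⊕ B)) (r : Set (A ⊕ B))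
    (p : {s : Set B // s ∈ (Pof R).blocks}) :
    Sum.inr p ∈ contract R r ↔ p.1 = Sum.inr ⁻¹' r := by
  simp [contract]

def Qof (R : SetPartition (A ⊕ B)) :
    SetPartition (A ⊕ {s : Set B // s ∈ (Pof R).blocks}) where
  blocks := contract R '' R.blocks
  nonempty_blocks := by
    rintro _ ⟨r, hr, rfl⟩
    obtain ⟨x, hx⟩ := R.nonempty_blocks r hr
    cases x with
    | inl a => exact ⟨Sum.inl a, (mem_contract_inl R r a).2 hx⟩
    | inr b =>
      exact ⟨Sum.inr ⟨Sum.inr ⁻¹' r, ⟨⟨b, hx⟩, r, hr, rfl⟩⟩,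
        (mem_contract_inr R r _).2 rfl⟩
  pairwise_disjoint := by
    rintro _ ⟨r, hr, rfl⟩ _ ⟨r', hr', rfl⟩ hne
    have hrr : r ≠ r' := fun h => hne (by rw [h])
    have hd := R.pairwise_disjoint r hr r' hr' hrr
    rw [Set.disjoint_left]
    intro x hx hx'
    cases x with
    | inl a =>
      exact Set.disjoint_left.1 hd ((mem_contract_inl R r a).1 hx)
        ((mem_contract_inl R r' a).1 hx')
    | inr p =>
      have h1 := (mem_contract_inr R r p).1 hx
      have h2 := (mem_contract_inr R r' p).1 hx'
      obtain ⟨b, hb⟩ := p.2.1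
      have hb1 : Sum.inr b ∈ r := by rw [h1] at hb; exact hb
      have hb2 : Sum.inr b ∈ r' := by rw [h2] at hb; exact hb
      exact Set.disjoint_left.1 hd hb1 hb2
  cover := by
    intro x
    cases x with
    | inl a =>
      obtain ⟨r, hr, hx⟩ := R.cover (Sum.inl a)
      exact ⟨_, ⟨r, hr, rfl⟩, (mem_contract_inl R r a).2 hx⟩
    | inr p =>
      obtain ⟨_, r, hr, hp⟩ := p.2
      exact ⟨_, ⟨r, hr, rfl⟩, (mem_contract_inr R r p).2 hp⟩

lemma Qof_separates (R : SetPartition (A ⊕ B)) : SeparatesLabels (Pof R) (Qof R) := by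
  rintro _ ⟨r, hr, rfl⟩ p p' hp hp'
  exact Subtype.ext (((mem_contract_inr R r p).1 hp).trans
    ((mem_contract_inr R r p').1 hp').symm)

lemma expand_contract (R : SetPartition (A ⊕ B)) {r : Set (A ⊕ B)} (hr : r ∈ R.blocks) :
    expandBlock (Pof R) (contract R r) = r := by
  ext x
  cases x with
  | inl a => rw [mem_expand_inl, mem_contract_inl]
  | inr b =>
    rw [mem_expand_inr]
    constructor
    · rintro ⟨p, hp, hb⟩
      rw [(mem_contract_inr R r p).1 hp] at hb
      exact hb
    · intro hb
      exact ⟨⟨Sum.inr ⁻¹' r, ⟨⟨b, hb⟩, r, hr, rfl⟩⟩, (mem_contract_inr R r _).2 rfl, hb⟩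

lemma fwd_Qof (R : SetPartition (A ⊕ B)) : fwd (Pof R) (Qof R) = R := by
  apply SetPartition.ext'
  show expandBlock (Pof R) '' (contract R '' R.blocks) = R.blocks
  rw [Set.image_image]
  exact Set.image_congr (fun r hr => expand_contract R hr) |>.trans (Set.image_id _)

lemma Pof_fwd (P : SetPartition B) (Q : SetPartition (A ⊕ {s : Set B // s ∈ P.blocks}))
    (hQ : SeparatesLabels P Q) : Pof (fwd P Q) = P := by
  apply SetPartition.ext'
  ext s
  constructor
  · rintro ⟨hne, _, ⟨q, hq, rfl⟩, rfl⟩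
    obtain ⟨b, hb⟩ := hne
    obtain ⟨p, hp, hbp⟩ := (mem_expand_inr P q b).1 hb
    have : Sum.inr ⁻¹' expandBlock P q = p.1 := by
      ext b'
      simp only [Set.mem_preimage]
      rw [mem_expand_inr]
      constructor
      · rintro ⟨p', hp', hb'⟩
        exact hQ q hq p' p hp' hp ▸ hb'
      · intro hb'
        exact ⟨p, hp, hb'⟩
    exact this ▸ p.2
  · intro hs
    obtain ⟨q, hq, hx⟩ := Q.cover (Sum.inr ⟨s, hs⟩)
    refine ⟨P.nonempty_blocks s hs, expandBlock P q, ⟨q, hq, rfl⟩, ?_⟩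
    ext b
    simp only [Set.mem_preimage]
    rw [mem_expand_inr]
    constructor
    · intro hb
      exact ⟨⟨s, hs⟩, hx, hb⟩
    · rintro ⟨p', hp', hb'⟩
      rw [congrArg Subtype.val (hQ q hq p' ⟨s, hs⟩ hp' hx)] at hb'
      exact hb'

lemma sigma_eq {P P' : SetPartition B} (h : P = P')
    (Q : SetPartition (A ⊕ {s : Set B // s ∈ P.blocks}))
    (Q' : SetPartition (A ⊕ {s : Set B // s ∈ P'.blocks}))
    (hQ : SeparatesLabels P Q) (hQ' : SeparatesLabels P' Q')
    (hb : expandBlock P '' Q.blocks = expandBlock P' '' Q'.blocks) :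
    (⟨P, Q, hQ⟩ : Σ P : SetPartition B,
        {Q : SetPartition (A ⊕ {s : Set B // s ∈ P.blocks}) // SeparatesLabels P Q}) =
      ⟨P', Q', hQ'⟩ := by
  subst h
  have : Q = Q' :=
    SetPartition.ext' (Set.image_injective.2 (expand_inj (A := A) P) hb)
  exact congrArg _ (Subtype.ext this)

theorem setPartition_merge_bijection' (A B : Type*) :
    ∃ e : (Σ P : SetPartition B,
        {Q : SetPartition (A ⊕ {s : Set B // s ∈ P.blocks}) // SeparatesLabels P Q}) ≃
        SetPartition (A ⊕ B),
      ∀ (P : SetPartition B)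
        (Q : {Q : SetPartition (A ⊕ {s : Set B // s ∈ P.blocks}) // SeparatesLabels P Q}),
        (e ⟨P, Q⟩).blocks = expandBlock P '' Q.1.blocks := by
  refine ⟨{
    toFun := fun x => fwd x.1 x.2.1
    invFun := fun R => ⟨Pof R, Qof R, Qof_separates R⟩
    left_inv := ?_
    right_inv := fwd_Qof }, fun P Q => rfl⟩
  rintro ⟨P, Q, hQ⟩
  exact sigma_eq (Pof_fwd P Q hQ) (Qof (fwd P Q)) Q (Qof_separates _) hQ
    (by show (fwd (Pof (fwd P Q)) (Qof (fwd P Q))).blocks = (fwd P Q).blocks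
        rw [fwd_Qof])

end SPAux

/-- for finite sets `A` and `B`, the set partitions of `A ⊔ B` are in
bijection with pairs `(P, Q)` of a set partition `P` of `B` and a set partition `Q` of
`A ⊔ P` separating the block-labels of `P`, where the bijection replaces each
block-label of `P` occurring in a block of `Q` by the elements of that block. -/
theorem setPartition_merge_bijection (A B : Type*) [Finite A] [Finite B] :
    ∃ e : (Σ P : SetPartition B,
        {Q : SetPartition (A ⊕ {s : Set B // s ∈ P.blocks}) // SeparatesLabels P Q}) ≃
        SetPartition (A ⊕ B),
      ∀ (P : SetPartition B)
        (Q : {Q : SetPartition (A ⊕ {s : Set B // s ∈ P.blocks}) // SeparatesLabels P Q}),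
        (e ⟨P, Q⟩).blocks = expandBlock P '' Q.1.blocks := by
  exact SPAux.setPartition_merge_bijection' A B
end

section
/- Let F: P(n+m) → ℚ be a function on partitions of n+m, let σ be a partition of n, and define for partitions τ of m: G_σ(τ) = ∑_{P ⊢ I(σ)⊔I(τ)} F((σ⊔τ)^P) and G'_σ(τ) = ∑_{P ⊢ I(σ)⊔I(τ), P separates I(τ)} F((σ⊔τ)^P), where (σ⊔τ)^P is the partition whose parts are the sums of parts of σ⊔τ over each block of P. Then G_σ(τ) = ∑_{P ⊢ I(τ)} G'_σ(τ^P). -/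
/-!
A partition `R` of `I(σ) ⊔ I(τ)` restricts to a partition `P` of `I(τ)`. Collapsing every block
of `P` to a point, `R` descends to a partition `Q` of `I(σ) ⊔ P.parts` that separates the
collapsed points, and `R` is the pullback of `Q` along the collapse map; conversely the pullback
of any separating `Q` restricts to `P`. The blocks of `R` and of `Q` have the same sums because a
collapsed point carries the sum of `τ` over its block. Grouping the partitions `R` on the left
by their restriction `P` therefore gives the right-hand side.
-/

open Finset

namespace Finpartition

variable {α β γ : Type*}

section Basic

variable [DecidableEq α]

theorem parts_eq_image_part {s : Finset α} (P : Finpartition s) : P.parts = s.image P.part := by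
  ext t
  refine ⟨fun ht => ?_, fun ht => ?_⟩
  · obtain ⟨x, hx, rfl⟩ := P.part_surjOn ht
    exact mem_image_of_mem _ hx
  · obtain ⟨x, hx, rfl⟩ := mem_image.1 ht
    exact P.part_mem.2 hx

variable [Fintype α]

theorem part_eq_part_iff_mem (P : Finpartition (univ : Finset α)) {x y : α} :
    P.part x = P.part y ↔ y ∈ P.part x := by
  rw [eq_comm, P.mem_part_iff_part_eq_part (mem_univ y) (mem_univ x)]

theorem ext_of_part_eq_part_iff {P P' : Finpartition (univ : Finset α)}
    (h : ∀ x y, P.part x = P.part y ↔ P'.part x = P'.part y) : P = P' := by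
  have hpart : P.part = P'.part := by
    ext x y
    rw [← part_eq_part_iff_mem, ← part_eq_part_iff_mem, h]
  rw [Finpartition.ext_iff, parts_eq_image_part, parts_eq_image_part, hpart]

theorem forall_mem_parts_eq_iff_injective {ι : Type*} (P : Finpartition (univ : Finset α))
    (g : ι → α) :
    (∀ q ∈ P.parts, ∀ i j, g i ∈ q → g j ∈ q → i = j) ↔ (fun i => P.part (g i)).Injective := by
  refine ⟨fun h i j hij => ?_, fun h q hq i j hi hj => ?_⟩
  · refine h _ (P.part_mem.2 (mem_univ (g i))) i j (P.mem_part (mem_univ _)) ?_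
    rw [show P.part (g i) = P.part (g j) from hij]
    exact P.mem_part (mem_univ _)
  · exact h ((P.part_eq_of_mem hq hi).trans (P.part_eq_of_mem hq hj).symm)

end Basic

section Comap

variable [DecidableEq α] [Fintype α] [DecidableEq β] [Fintype β]

noncomputable def comap (Q : Finpartition (univ : Finset β)) (f : α → β) :
    Finpartition (univ : Finset α) :=
  letI := Classical.decRel (Setoid.ker (Q.part ∘ f))
  ofSetoid (Setoid.ker (Q.part ∘ f))

variable (Q : Finpartition (univ : Finset β)) (f : α → β)

theorem part_comap_eq_part_comap_iff {x y : α} :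
    (Q.comap f).part x = (Q.comap f).part y ↔ Q.part (f x) = Q.part (f y) := by
  classical
  exact part_eq_part_iff_mem _ |>.trans mem_part_ofSetoid_iff_rel

theorem comap_eq_of_part_eq_part_iff {P : Finpartition (univ : Finset α)}
    (h : ∀ x y, P.part x = P.part y ↔ Q.part (f x) = Q.part (f y)) : Q.comap f = P :=
  ext_of_part_eq_part_iff fun x y => by rw [part_comap_eq_part_comap_iff, h]

theorem comap_comap_eq_self [DecidableEq γ] [Fintype γ] (R : Finpartition (univ : Finset γ))
    {g : α → γ} {h : γ → α} (hgh : ∀ z, R.part (g (h z)) = R.part z) :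
    (R.comap g).comap h = R :=
  comap_eq_of_part_eq_part_iff _ _ fun x y => by rw [part_comap_eq_part_comap_iff, hgh, hgh]

theorem part_comap (x : α) : (Q.comap f).part x = ({z | f z ∈ Q.part (f x)} : Finset α) := by
  ext z
  rw [mem_filter, ← part_eq_part_iff_mem, part_comap_eq_part_comap_iff, part_eq_part_iff_mem]
  simp only [mem_univ, true_and]

theorem parts_comap (hf : f.Surjective) :
    (Q.comap f).parts = Q.parts.image fun t => ({z | f z ∈ t} : Finset α) := by
  rw [parts_eq_image_part, parts_eq_image_part, image_image]
  ext t
  simp only [mem_image, mem_univ, true_and, part_comap, Function.comp_apply]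
  exact ⟨fun ⟨x, hx⟩ => ⟨f x, hx⟩, fun ⟨y, hy⟩ => (hf y).imp fun x hx => by rwa [hx]⟩

theorem map_sum_parts_comap {M : Type*} [AddCommMonoid M] (hf : f.Surjective) (w : α → M) :
    (Q.comap f).parts.val.map (fun s => ∑ x ∈ s, w x) =
      Q.parts.val.map (fun t => ∑ y ∈ t, ∑ x with f x = y, w x) := by
  have hinj : Set.InjOn (fun t : Finset β => ({z | f z ∈ t} : Finset α)) Q.parts := by
    intro t _ t' _ h
    ext y
    obtain ⟨x, rfl⟩ := hf y
    simpa using congrArg (x ∈ ·) h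
  rw [parts_comap Q f hf, image_val_of_injOn hinj, Multiset.map_map]
  refine Multiset.map_congr rfl fun t _ => ?_
  rw [Function.comp_apply, sum_fiberwise_eq_sum_filter]

end Comap

section Collapse

variable [DecidableEq β] [Fintype β] (P : Finpartition (univ : Finset β))

def block (j : β) : P.parts := ⟨P.part j, P.part_mem.2 (mem_univ j)⟩

theorem block_surjective : P.block.Surjective := fun p => by
  obtain ⟨j, -, hj⟩ := P.part_surjOn p.2
  exact ⟨j, Subtype.ext hj⟩

theorem block_eq_block_iff {i j : β} : P.block i = P.block j ↔ P.part i = P.part j :=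
  Subtype.ext_iff

theorem block_eq_iff_mem {j : β} {p : P.parts} : P.block j = p ↔ j ∈ p.1 :=
  Subtype.ext_iff.trans (P.part_eq_iff_mem p.2)

/-- On index sets, `α ⊕ β → α ⊕ P.parts` is the map `I(σ) ⊔ I(τ) → I(σ) ⊔ I(τ^P)`. -/
def collapse : α ⊕ β → α ⊕ P.parts :=
  Sum.map id P.block

theorem collapse_surjective : (P.collapse (α := α)).Surjective :=
  Sum.map_surjective.2 ⟨Function.surjective_id, P.block_surjective⟩

theorem exists_eq_inr_of_collapse_eq_inr {x : α ⊕ β} {p : P.parts}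
    (h : P.collapse x = .inr p) : ∃ j, x = .inr j ∧ P.block j = p := by
  cases x with
  | inl i => cases h
  | inr j => exact ⟨j, rfl, Sum.inr_injective h⟩

variable [DecidableEq α] [Fintype α]

theorem sum_fiber_collapse {M : Type*} [AddCommMonoid M] (σ : α → M) (τ : β → M)
    (y : α ⊕ P.parts) :
    ∑ x with P.collapse x = y, Sum.elim σ τ x = Sum.elim σ (fun p => ∑ j ∈ p.1, τ j) y := by
  rw [sum_filter, Fintype.sum_sum_type]
  cases y with
  | inl i => simp [collapse]
  | inr p => simp [collapse, block_eq_iff_mem]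

variable {P} {R : Finpartition (univ : Finset (α ⊕ β))}

theorem part_eq_part_of_collapse_eq (hR : R.comap Sum.inr = P) {x y : α ⊕ β}
    (hxy : P.collapse x = P.collapse y) : R.part x = R.part y := by
  cases x with
  | inl i => cases y with
    | inl j =>
      obtain rfl : i = j := Sum.inl_injective hxy
      rfl
    | inr j => cases hxy
  | inr i => cases y with
    | inl j => cases hxy
    | inr j =>
      rw [← part_comap_eq_part_comap_iff, hR, ← block_eq_block_iff]
      exact Sum.inr_injective hxy

theorem comap_inr_comap_collapse {Q : Finpartition (univ : Finset (α ⊕ P.parts))}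
    (hQ : (fun p => Q.part (Sum.inr p)).Injective) :
    (Q.comap P.collapse).comap Sum.inr = P := by
  refine comap_eq_of_part_eq_part_iff _ _ fun i j => ?_
  rw [part_comap_eq_part_comap_iff, ← block_eq_block_iff]
  exact hQ.eq_iff.symm

theorem injective_part_comap_inr (hR : R.comap Sum.inr = P) {r : α ⊕ P.parts → α ⊕ β}
    (hr : Function.RightInverse r P.collapse) :
    (fun p => (R.comap r).part (Sum.inr p)).Injective := by
  intro p p' hpp'
  obtain ⟨i, hi, rfl⟩ := P.exists_eq_inr_of_collapse_eq_inr (hr (.inr p))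
  obtain ⟨j, hj, rfl⟩ := P.exists_eq_inr_of_collapse_eq_inr (hr (.inr p'))
  rw [block_eq_block_iff, ← hR, part_comap_eq_part_comap_iff, ← hi, ← hj]
  exact (part_comap_eq_part_comap_iff _ _).1 hpp'

variable (P)

open scoped Classical in
theorem sum_filter_comap_inr_eq {M : Type*} [AddCommMonoid M]
    (g : Finpartition (univ : Finset (α ⊕ β)) → M) :
    ∑ R with R.comap Sum.inr = P, g R =
      ∑ Q : Finpartition (univ : Finset (α ⊕ P.parts))
        with (fun p => Q.part (Sum.inr p)).Injective, g (Q.comap P.collapse) := by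
  obtain ⟨r, hr⟩ : ∃ r, Function.RightInverse r (P.collapse (α := α)) :=
    ⟨_, Function.rightInverse_surjInv P.collapse_surjective⟩
  symm
  refine sum_nbij' (·.comap P.collapse) (·.comap r) (fun Q hQ => ?_) (fun R hR => ?_)
    (fun Q _ => ?_) (fun R hR => ?_) fun _ _ => rfl
  · simpa using comap_inr_comap_collapse (mem_filter.1 hQ).2
  · simpa using injective_part_comap_inr (mem_filter.1 hR).2 hr
  · exact comap_comap_eq_self Q fun y => by rw [hr y]
  · exact comap_comap_eq_self R fun x =>
      part_eq_part_of_collapse_eq (mem_filter.1 hR).2 (hr (P.collapse x))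

end Collapse

end Finpartition

open scoped Classical in
theorem sum_over_partitions_separating_general (a b : ℕ) (σ : Fin a → ℕ) (τ : Fin b → ℕ)
    (F : Multiset ℕ → ℚ) :
    (∑ P : Finpartition (Finset.univ : Finset (Fin a ⊕ Fin b)),
        F (P.parts.val.map (fun s => ∑ x ∈ s, Sum.elim σ τ x))) =
      ∑ P : Finpartition (Finset.univ : Finset (Fin b)),
        ∑ Q : Finpartition
            (Finset.univ : Finset (Fin a ⊕ {s : Finset (Fin b) // s ∈ P.parts})),
          if ∀ q ∈ Q.parts, ∀ p p' : {s : Finset (Fin b) // s ∈ P.parts},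
              Sum.inr p ∈ q → Sum.inr p' ∈ q → p = p'
          then F (Q.parts.val.map
              (fun s => ∑ x ∈ s, Sum.elim σ (fun p => ∑ i ∈ p.1, τ i) x))
          else 0 := by
  rw [← sum_fiberwise univ (fun R => R.comap Sum.inr)]
  refine sum_congr rfl fun P _ => ?_
  rw [Finpartition.sum_filter_comap_inr_eq, sum_filter]
  refine sum_congr rfl fun Q _ => ?_
  simp only [Finpartition.map_sum_parts_comap _ _ P.collapse_surjective,
    Finpartition.sum_fiber_collapse, Finpartition.forall_mem_parts_eq_iff_injective]

open scoped Classical in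
/-- Let `F` be a function on partitions of `n + m` (represented as
multisets of natural numbers), `σ` a partition of `n` indexed by `Fin a` and `τ` a
partition of `m` indexed by `Fin b`.  With
`G_σ(τ) = ∑_{P ⊢ I(σ)⊔I(τ)} F((σ⊔τ)^P)` and
`G'_σ(ρ) = ∑_{Q ⊢ I(σ)⊔I(ρ), Q separates I(ρ)} F((σ⊔ρ)^Q)`,
one has `G_σ(τ) = ∑_{P ⊢ I(τ)} G'_σ(τ^P)`  (on the right, `τ^P` is indexed by the
blocks of `P`, its part at a block being the sum of the parts of `τ` over the block). -/
theorem sum_over_partitions_separating (n m a b : ℕ) (σ : Fin a → ℕ) (τ : Fin b → ℕ)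
    (hσpos : ∀ i, 0 < σ i) (hτpos : ∀ i, 0 < τ i)
    (hσ : ∑ i, σ i = n) (hτ : ∑ i, τ i = m)
    (F : Multiset ℕ → ℚ) :
    (∑ P : Finpartition (Finset.univ : Finset (Fin a ⊕ Fin b)),
        F (P.parts.val.map (fun s => ∑ x ∈ s, Sum.elim σ τ x))) =
      ∑ P : Finpartition (Finset.univ : Finset (Fin b)),
        ∑ Q : Finpartition
            (Finset.univ : Finset (Fin a ⊕ {s : Finset (Fin b) // s ∈ P.parts})),
          if ∀ q ∈ Q.parts, ∀ p p' : {s : Finset (Fin b) // s ∈ P.parts},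
              Sum.inr p ∈ q → Sum.inr p' ∈ q → p = p'
          then F (Q.parts.val.map
              (fun s => ∑ x ∈ s, Sum.elim σ (fun p => ∑ i ∈ p.1, τ i) x))
          else 0 :=
  sum_over_partitions_separating_general a b σ τ F
end

section
/- Let g ≥ 2, 0 ≤ d, and suppose σ is a partition of d of length exactly 2g-2-d. If σ arises as the housing partition of a stable tree with 2g-2-d vertices and total genus g (with no vertex contributing zero, i.e., every vertex v has 2g(v)-3+n(v) ≥ 1), then σ contains at least two even parts. -/
theorem Multiset.two_le_card_filter_map_univ {α β : Type*} [Fintype α] (f : α → β)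
    (p : β → Prop) [DecidablePred p] {u v : α} (huv : u ≠ v) (hu : p (f u)) (hv : p (f v)) :
    2 ≤ (((Finset.univ : Finset α).val.map f).filter p).card := by
  rw [Multiset.filter_map, Multiset.card_map, ← Finset.filter_val, ← Finset.card_def]
  exact Finset.one_lt_card.mpr ⟨u, by simpa using hu, v, by simpa using hv, huv⟩

open scoped Classical in
theorem housing_partition_two_even_parts_general (g d : ℕ)
    (hN : 2 ≤ 2 * g - 2 - d)
    (G : SimpleGraph (Fin (2 * g - 2 - d))) (hT : G.IsTree)
    (gv : Fin (2 * g - 2 - d) → ℕ)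
    (σ : Multiset ℕ)
    (hσ : σ = (Finset.univ : Finset (Fin (2 * g - 2 - d))).val.map
        (fun v => 2 * gv v + G.degree v - 3)) :
    2 ≤ (σ.filter (fun x => Even x)).card := by
  have : Nontrivial (Fin (2 * g - 2 - d)) := Fin.nontrivial_iff_two_le.mpr hN
  obtain ⟨u, v, huv, hu, hv⟩ := hT.exists_ne_and_degree_eq_one
  -- a leaf `w` contributes `2 * gv w - 2`, which is even also when truncated to `0`
  have leaf_even : ∀ w, G.degree w = 1 → Even (2 * gv w + G.degree w - 3) :=
    fun w hw => ⟨gv w - 1, by omega⟩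
  subst hσ
  exact Multiset.two_le_card_filter_map_univ _ _ huv (leaf_even u hu) (leaf_even v hv)

open scoped Classical in
/-- let `g ≥ 2` and let `σ` be a partition of `d` of length exactly
`2g-2-d ≥ 2`.  If `σ` arises as the housing partition of a stable tree with `2g-2-d`
vertices and total genus `g` in which every vertex contributes a positive value
(`2g(v) - 3 + n(v) ≥ 1`, so `σ` is the multiset of all the values `2g(v)-3+n(v)`),
then `σ` contains at least two even parts. -/
theorem housing_partition_two_even_parts (g d : ℕ) (hg : 2 ≤ g)
    (hN : 2 ≤ 2 * g - 2 - d)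
    (G : SimpleGraph (Fin (2 * g - 2 - d))) (hT : G.IsTree)
    (gv : Fin (2 * g - 2 - d) → ℕ) (hgv : (∑ v, gv v) = g)
    (hstable : ∀ v, 2 < 2 * gv v + G.degree v)
    (hpos : ∀ v, 1 ≤ 2 * gv v + G.degree v - 3)
    (σ : Multiset ℕ)
    (hσ : σ = (Finset.univ : Finset (Fin (2 * g - 2 - d))).val.map
        (fun v => 2 * gv v + G.degree v - 3))
    (hlen : σ.card = 2 * g - 2 - d) (hsum : σ.sum = d) :
    2 ≤ (σ.filter (fun x => Even x)).card :=
  housing_partition_two_even_parts_general g d hN G hT gv σ hσ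
end

section
/- Let d ≥ 0 and let σ be a partition of d with an even number 2k+2 (k ≥ 0) of even parts after padding with zeros to length N := 2g-2-d ≥ ℓ(σ), where either ℓ(σ) < N, or ℓ(σ) = N and σ has at least two even parts. Then there exists a tree on N vertices, each of degree at most 3, in which exactly 2k+2 vertices have odd degree, together with a bijection assigning the padded parts τ_i to vertices so that even parts go to odd-degree vertices; consequently the genus values g_i = (τ_i + 3 - n_i)/2 are nonnegative integers making the tree a stable tree of total genus g with housing partition σ. -/
/-!
Take `b` to be the number of odd parts of `σ` and build a caterpillar on `N = 2k + 2 + b`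
vertices: a spine `0 - 1 - ⋯ - (k+1+b)` with one extra leaf on each of `1, …, k`. It is a tree
of maximal degree `3` whose `b` spine vertices `k+1, …, k+b` have degree `2` and whose other
`2k + 2` vertices have odd degree. Put the odd parts on the degree-`2` vertices and the even
parts and padding zeros on the rest; then `τ_v + 3 - n_v` is even and nonnegative, so
`g_v = (τ_v + 3 - n_v) / 2` is a natural number with `2 g_v - 3 + n_v = τ_v`. Summing, the degree
sum `2N - 2` of a tree gives `∑ g_v = g`. Such a `k` exists since `N ≡ d ≡ b (mod 2)` and the
hypothesis makes `N - b`, the number of even padded parts, positive.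
-/

open Finset

open scoped Classical in
/-- The housing partition of a stable tree: the multiset of the positive values
`2g(v) - 3 + n(v)` over the vertices `v`, where `n(v)` is the degree of `v`. -/
noncomputable def housingData {N : ℕ} (G : SimpleGraph (Fin N)) (gv : Fin N → ℕ) :
    Multiset ℕ :=
  ((Finset.univ : Finset (Fin N)).val.map (fun v => 2 * gv v + G.degree v - 3)).filter
    (fun x => 0 < x)

open SimpleGraph

theorem Multiset.exists_map_univ_eq {V α : Type*} [Fintype V] (s : Multiset α)
    (h : s.card = Fintype.card V) : ∃ f : V → α, univ.val.map f = s := by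
  let e : V ≃ Fin s.toList.length := Fintype.equivFinOfCardEq (by simp [h])
  refine ⟨fun v => s.toList.get (e v), ?_⟩
  have hget : univ.val.map s.toList.get = s := by
    rw [Fin.univ_val_map, List.ofFn_get, Multiset.coe_toList]
  conv_rhs => rw [← hget, ← map_univ_equiv e, map_val, Multiset.map_map]
  rfl

theorem exists_map_univ_eq_and_iff {V α : Type*} [Fintype V] (P : V → Prop) [DecidablePred P]
    (Q : α → Prop) [DecidablePred Q] (s : Multiset α) (hcard : s.card = Fintype.card V)
    (hQ : (s.filter Q).card = #{v | P v}) :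
    ∃ f : V → α, univ.val.map f = s ∧ ∀ v, Q (f v) ↔ P v := by
  obtain ⟨f₁, hf₁⟩ := Multiset.exists_map_univ_eq (V := {v // P v}) (s.filter Q)
    (by rw [hQ, Fintype.card_subtype])
  obtain ⟨f₂, hf₂⟩ := Multiset.exists_map_univ_eq (V := {v // ¬P v}) (s.filter (¬Q ·))
    (by
      have hs := Multiset.card_add (s.filter Q) (s.filter (¬Q ·))
      rw [Multiset.filter_add_not] at hs
      rw [Fintype.card_subtype_compl, Fintype.card_subtype, ← hQ, ← hcard]
      omega)
  refine ⟨fun v => if h : P v then f₁ ⟨v, h⟩ else f₂ ⟨v, h⟩, ?_, fun v => ?_⟩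
  · rw [← Multiset.filter_add_not P univ.val, Multiset.map_add, ← filter_val, ← filter_val,
      ← univ_val_map_subtype_restrict, ← univ_val_map_subtype_restrict]
    convert Multiset.filter_add_not Q s using 2
    · rw [← hf₁]; congr 1; funext v; simp [v.2]
    · rw [← hf₂]; congr 1; funext v; simp [v.2]
  · by_cases h : P v
    · have : f₁ ⟨v, h⟩ ∈ s.filter Q := hf₁ ▸ Multiset.mem_map_of_mem _ (mem_univ _)
      simpa [h] using (Multiset.mem_filter.1 this).2
    · have : f₂ ⟨v, h⟩ ∈ s.filter (¬Q ·) :=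
        hf₂ ▸ Multiset.mem_map_of_mem _ (mem_univ _)
      simpa [h] using (Multiset.mem_filter.1 this).2

theorem Multiset.even_sum_iff_even_card_odd (s : Multiset ℕ) :
    Even s.sum ↔ Even (s.filter Odd).card := by
  induction s using Multiset.induction_on with
  | empty => simp
  | cons a s ih =>
    rw [Multiset.sum_cons, Multiset.filter_cons, Multiset.card_add, Nat.even_add, Nat.even_add, ih]
    rcases Nat.even_or_odd a with ha | ha
    · simp [ha, Nat.not_odd_iff_even.2 ha]
    · simp [ha, Nat.not_even_iff_odd.2 ha]

open scoped Classical

def parentGraph (n : ℕ) (p : ℕ → ℕ) : SimpleGraph (Fin n) :=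
  SimpleGraph.fromRel fun v w => p v = w ∧ w < v

section ParentGraph

variable {n : ℕ} {p : ℕ → ℕ}

theorem parentGraph_adj {v w : Fin n} :
    (parentGraph n p).Adj v w ↔ (p v = w ∧ w < v) ∨ (p w = v ∧ v < w) := by
  simp only [parentGraph, fromRel_adj, ne_eq, and_iff_right_iff_imp]
  rintro (⟨-, h⟩ | ⟨-, h⟩) rfl <;> exact lt_irrefl _ h

variable (hp : ∀ v, 0 < v → p v < v)
include hp

theorem parentGraph_reachable_zero (hn : 0 < n) (v : Fin n) :
    (parentGraph n p).Reachable v ⟨0, hn⟩ := by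
  induction h : v.val using Nat.strong_induction_on generalizing v with
  | _ m ih =>
    rcases Nat.eq_zero_or_pos m with rfl | hm
    · obtain rfl : v = ⟨0, hn⟩ := Fin.ext h
      rfl
    · have hpv : p v < v := hp v (h ▸ hm)
      have hadj : (parentGraph n p).Adj v ⟨p v, hpv.trans v.2⟩ :=
        parentGraph_adj.2 (.inl ⟨rfl, hpv⟩)
      exact hadj.reachable.trans (ih _ (h ▸ hpv) _ rfl)

theorem parentGraph_card_edgeFinset (hn : 0 < n) :
    #(parentGraph n p).edgeFinset + 1 = n := by
  have hbij : #(univ.erase (⟨0, hn⟩ : Fin n)) = #(parentGraph n p).edgeFinset := by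
    have hlt : ∀ v ∈ univ.erase (⟨0, hn⟩ : Fin n), p v < v := fun v hv =>
      hp v (Nat.pos_of_ne_zero fun h => (mem_erase.1 hv).1 (Fin.ext h))
    refine card_bij (fun v hv => s(v, ⟨p v, (hlt v hv).trans v.2⟩)) (fun v hv => ?_) ?_ ?_
    · exact mem_edgeFinset.2 (parentGraph_adj.2 (.inl ⟨rfl, hlt v hv⟩))
    · intro v hv w hw hvw
      rcases Sym2.eq_iff.1 hvw with ⟨h, -⟩ | ⟨hvp, hpw⟩
      · exact h
      · have := hlt v hv; have := hlt w hw
        simp only [Fin.ext_iff] at hvp hpw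
        omega
    · intro e he
      induction e using Sym2.inductionOn with
      | hf v w =>
      rcases parentGraph_adj.1 (mem_edgeFinset.1 he) with ⟨hvw, hlt⟩ | ⟨hwv, hlt⟩
      · refine ⟨v, mem_erase.2 ⟨fun h => ?_, mem_univ _⟩, by simp [hvw]⟩
        simp [h, Fin.lt_def] at hlt
      · refine ⟨w, mem_erase.2 ⟨fun h => ?_, mem_univ _⟩, by simp [hwv]⟩
        simp [h, Fin.lt_def] at hlt
  rw [← hbij, card_erase_of_mem (mem_univ _), card_univ, Fintype.card_fin]
  omega

theorem parentGraph_isTree (hn : 0 < n) : (parentGraph n p).IsTree := by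
  rw [isTree_iff_connected_and_card, connected_iff_exists_forall_reachable]
  refine ⟨⟨⟨0, hn⟩, fun v => (parentGraph_reachable_zero hp hn v).symm⟩, ?_⟩
  rw [Nat.card_fin, ← coe_edgeFinset, Nat.card_coe_set_eq, Set.ncard_coe_finset]
  exact parentGraph_card_edgeFinset hp hn

end ParentGraph

/-- Spine vertices `x ≤ k+1+b` hang from `x - 1`; vertex `k+1+b+i` is a leaf on spine vertex
`i`. -/
def caterpillarParent (k b x : ℕ) : ℕ := if x < k + 2 + b then x - 1 else x - (k + 1 + b)

def caterpillar (k b : ℕ) : SimpleGraph (Fin (2 * k + 2 + b)) :=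
  parentGraph _ (caterpillarParent k b)

section Caterpillar

variable (k b : ℕ)

theorem caterpillar_isTree : (caterpillar k b).IsTree :=
  parentGraph_isTree (fun x hx => by unfold caterpillarParent; split_ifs <;> omega) (by omega)

theorem caterpillar_degree (v : Fin (2 * k + 2 + b)) :
    (caterpillar k b).degree v =
      if v.val = 0 then 1 else if v.val ≤ k then 3 else if v.val ≤ k + b then 2 else 1 := by
  have hv := v.2
  have hnbr : ∀ S, (∀ w, (caterpillar k b).Adj v w ↔ w ∈ S) →
      (caterpillar k b).degree v = #S := fun S hS => by
    rw [← card_neighborFinset_eq_degree]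
    congr 1
    ext w
    rw [mem_neighborFinset, hS]
  have hadj : ∀ w, (caterpillar k b).Adj v w ↔
      (caterpillarParent k b v = w ∧ w.val < v) ∨ (caterpillarParent k b w = v ∧ v.val < w) :=
    fun w => parentGraph_adj
  split_ifs with h0 h1 h2
  · refine (hnbr {⟨1, by omega⟩} fun w => ?_).trans (card_singleton _)
    simp only [hadj, mem_singleton, Fin.ext_iff, caterpillarParent]
    split_ifs <;> omega
  · refine (hnbr {⟨v - 1, by omega⟩, ⟨v + 1, by omega⟩, ⟨k + 1 + b + v, by omega⟩}
      fun w => ?_).trans ?_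
    · simp only [hadj, mem_insert, mem_singleton, Fin.ext_iff, caterpillarParent]
      split_ifs <;> omega
    · rw [card_insert_of_notMem (by simp [Fin.ext_iff]; omega),
        card_insert_of_notMem (by simp [Fin.ext_iff]; omega), card_singleton]
  · refine (hnbr {⟨v - 1, by omega⟩, ⟨v + 1, by omega⟩} fun w => ?_).trans ?_
    · simp only [hadj, mem_insert, mem_singleton, Fin.ext_iff, caterpillarParent]
      split_ifs <;> omega
    · rw [card_insert_of_notMem (by simp [Fin.ext_iff]), card_singleton]
  · refine (hnbr {⟨caterpillarParent k b v, by unfold caterpillarParent; split_ifs <;> omega⟩}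
      fun w => ?_).trans (card_singleton _)
    simp only [hadj, mem_singleton, Fin.ext_iff, caterpillarParent]
    split_ifs <;> omega

theorem caterpillar_degree_le (v : Fin (2 * k + 2 + b)) : (caterpillar k b).degree v ≤ 3 := by
  rw [caterpillar_degree]; split_ifs <;> omega

theorem card_filter_odd_caterpillar_degree :
    #{v | Odd ((caterpillar k b).degree v)} = 2 * k + 2 := by
  have hodd : ∀ v : Fin (2 * k + 2 + b),
      Odd ((caterpillar k b).degree v) ↔ ¬(k + 1 ≤ v.val ∧ v.val ≤ k + b) := by
    intro v
    rw [caterpillar_degree, Nat.odd_iff]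
    split_ifs <;> norm_num <;> omega
  have heven : #{v : Fin (2 * k + 2 + b) | k + 1 ≤ v.val ∧ v.val ≤ k + b} = b := by
    rw [← card_map Fin.valEmbedding, show map Fin.valEmbedding _ = Icc (k + 1) (k + b) from ?_,
      Nat.card_Icc]
    · omega
    ext x
    simp only [mem_map, mem_filter, mem_univ, true_and, Fin.valEmbedding_apply, mem_Icc]
    exact ⟨by rintro ⟨v, hv, rfl⟩; exact hv, fun hx => ⟨⟨x, by omega⟩, hx, rfl⟩⟩
  simp_rw [hodd]
  rw [filter_not, card_sdiff_of_subset (filter_subset _ _), heven, card_univ, Fintype.card_fin]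
  omega

end Caterpillar

def padZeros (σ : Multiset ℕ) (N : ℕ) : Multiset ℕ :=
  σ + Multiset.replicate (N - σ.card) 0

section PadZeros

variable (σ : Multiset ℕ) (N : ℕ)

theorem card_padZeros (h : σ.card ≤ N) : (padZeros σ N).card = N := by
  simp only [padZeros, Multiset.card_add, Multiset.card_replicate]
  omega

theorem sum_padZeros : (padZeros σ N).sum = σ.sum := by
  simp [padZeros]

theorem filter_pos_padZeros (hpos : ∀ x ∈ σ, 0 < x) :
    (padZeros σ N).filter (0 < ·) = σ := by
  rw [padZeros, Multiset.filter_add, Multiset.filter_eq_self.2 hpos,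
    Multiset.filter_eq_nil.2 fun x hx => by simp [Multiset.eq_of_mem_replicate hx], add_zero]

theorem card_filter_even_padZeros :
    ((padZeros σ N).filter Even).card = (σ.filter Even).card + (N - σ.card) := by
  rw [padZeros, Multiset.filter_add, Multiset.card_add,
    (Multiset.filter_eq_self (s := Multiset.replicate _ 0)).2 fun x hx => by
      simp [Multiset.eq_of_mem_replicate hx],
    Multiset.card_replicate]

end PadZeros

noncomputable def genusOf {V : Type*} [Fintype V] (G : SimpleGraph V) (τ : V → ℕ) (v : V) :
    ℕ :=
  (τ v + 3 - G.degree v) / 2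

section Genus

variable {V : Type*} [Fintype V] (G : SimpleGraph V) (τ : V → ℕ)

theorem two_mul_genusOf_add_degree {v : V} (hdeg : G.degree v ≤ 3)
    (hpar : Even (τ v) ↔ Odd (G.degree v)) : 2 * genusOf G τ v + G.degree v = τ v + 3 := by
  rw [Nat.even_iff, Nat.odd_iff] at hpar
  unfold genusOf
  omega

theorem sum_genusOf (hG : G.IsTree) (hdeg : ∀ v, G.degree v ≤ 3)
    (hpar : ∀ v, Even (τ v) ↔ Odd (G.degree v)) {g : ℕ}
    (hg : Fintype.card V + ∑ v, τ v + 2 = 2 * g) : ∑ v, genusOf G τ v = g := by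
  have h := Finset.sum_congr rfl fun v (_ : v ∈ univ) =>
    two_mul_genusOf_add_degree G τ (hdeg v) (hpar v)
  rw [sum_add_distrib, ← mul_sum, sum_degrees_eq_twice_card_edges, sum_add_distrib, sum_const,
    card_univ, smul_eq_mul] at h
  have := hG.card_edgeFinset
  omega

end Genus

theorem housingData_genusOf {N : ℕ} (G : SimpleGraph (Fin N)) (τ : Fin N → ℕ)
    (hdeg : ∀ v, G.degree v ≤ 3) (hpar : ∀ v, Even (τ v) ↔ Odd (G.degree v)) :
    housingData G (genusOf G τ) = (univ.val.map τ).filter (0 < ·) := by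
  unfold housingData
  congr 1
  exact Multiset.map_congr rfl fun v _ => by
    have := two_mul_genusOf_add_degree G τ (hdeg v) (hpar v)
    omega

open scoped Classical in
theorem existence_of_housing_tree_general (g d : ℕ)
    (σ : Multiset ℕ) (hpos : ∀ x ∈ σ, 0 < x) (hsum : σ.sum = d)
    (h : σ.card < 2 * g - 2 - d ∨
      (σ.card = 2 * g - 2 - d ∧ 2 ≤ (σ.filter (fun x => Even x)).card)) :
    ∃ (G : SimpleGraph (Fin (2 * g - 2 - d))) (gv : Fin (2 * g - 2 - d) → ℕ),
      G.IsTree ∧ (∀ v, G.degree v ≤ 3) ∧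
      ((Finset.univ : Finset (Fin (2 * g - 2 - d))).filter
          (fun v => Odd (G.degree v))).card =
        (σ.filter (fun x => Even x)).card + (2 * g - 2 - d - σ.card) ∧
      (∑ v, gv v) = g ∧ (∀ v, 2 < 2 * gv v + G.degree v) ∧
      (∀ v, Even (2 * gv v + G.degree v - 3) ∧ 0 < 2 * gv v + G.degree v - 3 →
        Odd (G.degree v)) ∧
      housingData G gv = σ := by
  set b := (σ.filter Odd).card
  have hsplit : (σ.filter (fun x => Even x)).card + b = σ.card := by
    conv_rhs => rw [← Multiset.filter_add_not Even σ]
    simp only [b, Multiset.card_add, Nat.not_even_iff_odd]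
  have hparity : Even (d + b) := by
    rw [← hsum, Nat.even_add, Multiset.even_sum_iff_even_card_odd]
  rw [Nat.even_iff] at hparity
  generalize hN : 2 * g - 2 - d = N at h ⊢
  have hcard : σ.card ≤ N := by omega
  obtain ⟨k, rfl⟩ : ∃ k, N = 2 * k + 2 + b := ⟨(N - b) / 2 - 1, by omega⟩
  have hodd : #{v | Odd ((caterpillar k b).degree v)} =
      (σ.filter (fun x => Even x)).card + (2 * k + 2 + b - σ.card) := by
    rw [card_filter_odd_caterpillar_degree]
    omega
  obtain ⟨τ, hτ, hpar⟩ :=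
    exists_map_univ_eq_and_iff (fun v => Odd ((caterpillar k b).degree v)) Even
      (padZeros σ (2 * k + 2 + b)) (by rw [card_padZeros σ _ hcard, Fintype.card_fin])
      ((card_filter_even_padZeros σ _).trans hodd.symm)
  have hdeg := caterpillar_degree_le k b
  have hsumτ : ∑ v, τ v = d := by
    rw [sum_eq_multiset_sum, hτ, sum_padZeros, hsum]
  refine ⟨caterpillar k b, genusOf (caterpillar k b) τ, caterpillar_isTree k b, hdeg, hodd,
    sum_genusOf _ _ (caterpillar_isTree k b) hdeg hpar (by rw [Fintype.card_fin, hsumτ]; omega),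
    fun v => ?_, fun v hv => ?_, ?_⟩
  · have := two_mul_genusOf_add_degree _ τ (hdeg v) (hpar v)
    omega
  · rw [two_mul_genusOf_add_degree _ τ (hdeg v) (hpar v), Nat.add_sub_cancel] at hv
    exact (hpar v).1 hv.1
  · rw [housingData_genusOf _ τ hdeg hpar, hτ, filter_pos_padZeros σ _ hpos]

open scoped Classical in
/-- if `σ` is a partition of `d` which, padded with zeros to length
`N = 2g-2-d`, has an (even) number of even entries, and either `ℓ(σ) < N` or
`ℓ(σ) = N` with at least two even parts, then there is a stable tree of total genus
`g` on `N` vertices, all of degree at most `3`, whose number of odd-degree vertices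
equals the number of even padded parts of `σ`, whose genus values are nonnegative
integers, and whose housing partition is `σ`. -/
theorem existence_of_housing_tree (g d : ℕ) (hg : 2 ≤ g)
    (σ : Multiset ℕ) (hpos : ∀ x ∈ σ, 0 < x) (hsum : σ.sum = d)
    (h : σ.card < 2 * g - 2 - d ∨
      (σ.card = 2 * g - 2 - d ∧ 2 ≤ (σ.filter (fun x => Even x)).card)) :
    ∃ (G : SimpleGraph (Fin (2 * g - 2 - d))) (gv : Fin (2 * g - 2 - d) → ℕ),
      G.IsTree ∧ (∀ v, G.degree v ≤ 3) ∧
      ((Finset.univ : Finset (Fin (2 * g - 2 - d))).filter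
          (fun v => Odd (G.degree v))).card =
        (σ.filter (fun x => Even x)).card + (2 * g - 2 - d - σ.card) ∧
      (∑ v, gv v) = g ∧ (∀ v, 2 < 2 * gv v + G.degree v) ∧
      (∀ v, Even (2 * gv v + G.degree v - 3) ∧ 0 < 2 * gv v + G.degree v - 3 →
        Odd (G.degree v)) ∧
      housingData G gv = σ :=
  existence_of_housing_tree_general g d σ hpos hsum h
end

section
/- Fix a finite index set I and a total order < on I. For a sequence S of symbols with σ_i + 1 symbols of kind i for each i ∈ I, define the failure set partition Q_S of I as the finest set partition such that whenever i < j and the last symbol of kind i is immediately followed by the first symbol of kind j in S, i and j lie in the same block. Then for a set partition P of I, the number of sequences S in which, for each block p = {p_1 < ... < p_k} of P, the last symbol of kind p_m is immediately followed by the first symbol of kind p_{m+1} for m = 1, ..., k-1, equals the number of sequences S whose failure set partition Q_S is a coarsening of P obtained by merging blocks of P whose maximum elements and minimum elements interleave consistently; in particular, the signed sum ∑_{P} (-1)^{|P|+|I|} #{such S} over all set partitions P counts exactly the sequences S with Q_S the discrete partition (all blocks singletons). -/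
open Finset

/-- In the word `w`, the last symbol of kind `i` is immediately followed by the first
symbol of kind `j`. -/
def LastFirstAdj {n T : ℕ} (w : Fin T → Fin n) (i j : Fin n) : Prop :=
  ∃ s t : Fin T, w s = i ∧ w t = j ∧ (t : ℕ) = (s : ℕ) + 1 ∧
    (∀ u, w u = i → u ≤ s) ∧ (∀ u, w u = j → t ≤ u)

/-!
For a fixed word `w`, the relation `LastFirstAdj w` is left and right unique: a symbol has
one successor and one predecessor. Call a set partition a chain partition if consecutive
elements of each block are related. After exchanging the two sums, it suffices to show that the
signed count of chain partitions is `1` when no `i < j` are related and `0` otherwise. In the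
first case only the discrete partition is a chain partition. In the second, fix related
`i < j`. Uniqueness forces `j` to follow `i` directly whenever they share a block, so cutting
that block between `i` and `j` and merging the blocks of `i` and `j` are mutually inverse.
This gives an involution on chain partitions that changes the number of blocks by one.
-/

namespace Finpartition

variable {α : Type*} [DecidableEq α] {s : Finset α} {P : Finpartition s}
  {old new : Finset (Finset α)}

def CanReplace (P : Finpartition s) (old new : Finset (Finset α)) : Prop :=
  old ⊆ P.parts ∧ (new : Set (Finset α)).PairwiseDisjoint id ∧ ∅ ∉ new ∧
    new.sup id = old.sup id

lemma CanReplace.disjoint (h : P.CanReplace old new) {p t : Finset α}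
    (hp : p ∈ P.parts \ old) (ht : t ∈ new) : Disjoint p t := by
  obtain ⟨hold, -, -, hsup⟩ := h
  rw [mem_sdiff] at hp
  refine Disjoint.mono_right (hsup ▸ le_sup (f := id) ht) (Finset.disjoint_sup_right.2 ?_)
  exact fun q hq => P.disjoint hp.1 (hold hq) (ne_of_mem_of_not_mem hq hp.2).symm

lemma CanReplace.disjoint_sdiff (h : P.CanReplace old new) : Disjoint (P.parts \ old) new :=
  disjoint_left.2 fun t hp ht =>
    h.2.2.1 (by rwa [← bot_eq_empty, ← disjoint_self.1 (h.disjoint hp ht)])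

open scoped Classical in
/-- This is `P` itself when `P.CanReplace old new` fails. -/
noncomputable def replace (P : Finpartition s) (old new : Finset (Finset α)) : Finpartition s :=
  if h : P.CanReplace old new then
    { parts := P.parts \ old ∪ new
      supIndep := by
        rw [supIndep_iff_pairwiseDisjoint, coe_union]
        exact (P.disjoint.subset (coe_subset.2 sdiff_subset)).union h.2.1
          fun p hp t ht _ => h.disjoint hp ht
      sup_parts := by
        rw [sup_union, h.2.2.2, ← sup_union, sdiff_union_of_subset h.1, P.sup_parts]
      bot_notMem := by
        rw [mem_union, not_or, bot_eq_empty]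
        exact ⟨fun hp => P.empty_notMem_parts (mem_sdiff.1 hp).1, h.2.2.1⟩ }
  else P

lemma parts_replace (h : P.CanReplace old new) :
    (P.replace old new).parts = P.parts \ old ∪ new := by
  rw [replace, dif_pos h]

lemma CanReplace.replace (h : P.CanReplace old new) : (P.replace old new).CanReplace new old :=
  ⟨parts_replace h ▸ subset_union_right, P.disjoint.subset (coe_subset.2 h.1),
    fun h0 => P.empty_notMem_parts (h.1 h0), h.2.2.2.symm⟩

lemma replace_replace (h : P.CanReplace old new) : (P.replace old new).replace new old = P := by
  ext1
  rw [parts_replace h.replace, parts_replace h, union_sdiff_right,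
    sdiff_eq_self_of_disjoint h.disjoint_sdiff, sdiff_union_of_subset h.1]

lemma card_replace (h : P.CanReplace old new) :
    #(P.replace old new).parts + #old = #P.parts + #new := by
  rw [parts_replace h, card_union_of_disjoint h.disjoint_sdiff, add_right_comm,
    card_sdiff_add_card_eq_card h.1]

lemma part_replace_of_mem (h : P.CanReplace old new) {t : Finset α} (ht : t ∈ new) {a : α}
    (ha : a ∈ t) : (P.replace old new).part a = t :=
  part_eq_of_mem _ (parts_replace h ▸ mem_union_right _ ht) ha

end Finpartition

namespace Finset

variable {α : Type*} [LinearOrder α] {r : α → α → Prop} {p q : Finset α}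

def IsSuccChain (r : α → α → Prop) (p : Finset α) : Prop :=
  ∀ x ∈ p, ∀ y ∈ p, x < y → (∀ z ∈ p, ¬(x < z ∧ z < y)) → r x y

lemma IsSuccChain.exists_next (h : p.IsSuccChain r) {x y : α} (hx : x ∈ p) (hy : y ∈ p)
    (hxy : x < y) : ∃ m ∈ p, x < m ∧ m ≤ y ∧ r x m := by
  have hne : (p.filter (x < ·)).Nonempty := ⟨y, mem_filter.2 ⟨hy, hxy⟩⟩
  obtain ⟨hm, hxm⟩ := mem_filter.1 ((p.filter (x < ·)).min'_mem hne)
  refine ⟨_, hm, hxm, min'_le _ y (mem_filter.2 ⟨hy, hxy⟩),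
    h x hx _ hm hxm fun z hz hb => ?_⟩
  exact (min'_le _ z (mem_filter.2 ⟨hz, hb.1⟩)).not_gt hb.2

lemma IsSuccChain.exists_prev (h : p.IsSuccChain r) {x y : α} (hx : x ∈ p) (hy : y ∈ p)
    (hxy : x < y) : ∃ m ∈ p, x ≤ m ∧ m < y ∧ r m y := by
  have hne : (p.filter (· < y)).Nonempty := ⟨x, mem_filter.2 ⟨hx, hxy⟩⟩
  obtain ⟨hm, hmy⟩ := mem_filter.1 ((p.filter (· < y)).max'_mem hne)
  refine ⟨_, hm, le_max' _ x (mem_filter.2 ⟨hx, hxy⟩), hmy,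
    h _ hm y hy hmy fun z hz hb => ?_⟩
  exact (le_max' _ z (mem_filter.2 ⟨hz, hb.2⟩)).not_gt hb.1

lemma IsSuccChain.mono (h : p.IsSuccChain r) (hqp : q ⊆ p)
    (hq : ∀ x ∈ q, ∀ y ∈ q, ∀ z ∈ p, x < z → z < y → z ∈ q) : q.IsSuccChain r :=
  fun x hx y hy hxy hb =>
    h x (hqp hx) y (hqp hy) hxy fun z hz hxzy => hb z (hq x hx y hy z hz hxzy.1 hxzy.2) hxzy

lemma IsSuccChain.union (hp : p.IsSuccChain r) (hq : q.IsSuccChain r) {a b : α} (ha : a ∈ p)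
    (hb : b ∈ q) (hpa : ∀ x ∈ p, x ≤ a) (hqb : ∀ y ∈ q, b ≤ y) (hab : a < b) (hr : r a b) :
    (p ∪ q).IsSuccChain r := by
  intro x hx y hy hxy hbet
  rcases mem_union.1 hx with hx | hx <;> rcases mem_union.1 hy with hy | hy
  · exact hp x hx y hy hxy fun z hz => hbet z (mem_union_left _ hz)
  · obtain rfl : x = a := (hpa x hx).eq_of_not_lt fun hxa =>
      hbet a (mem_union_left _ ha) ⟨hxa, hab.trans_le (hqb y hy)⟩
    obtain rfl : y = b := ((hqb y hy).eq_of_not_lt fun hby =>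
      hbet b (mem_union_right _ hb) ⟨hab, hby⟩).symm
    exact hr
  · exact absurd hxy ((hpa y hy).trans (hab.le.trans (hqb x hx))).not_gt
  · exact hq x hx y hy hxy fun z hz => hbet z (mem_union_right _ hz)

variable {U : Finset α} {i j : α}

def cut (U : Finset α) (i j : α) : Finset (Finset α) := {U.filter (· ≤ i), U.filter (j ≤ ·)}

lemma filter_union_filter_of_le_or_le (h : ∀ z ∈ U, z ≤ i ∨ j ≤ z) :
    U.filter (· ≤ i) ∪ U.filter (j ≤ ·) = U := by
  rw [← filter_or, filter_true_of_mem h]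

lemma disjoint_filter_le_filter_ge (hij : i < j) :
    Disjoint (U.filter (· ≤ i)) (U.filter (j ≤ ·)) :=
  disjoint_filter.2 fun _ _ hzi hjz => (hij.trans_le (hjz.trans hzi)).false

lemma pairwiseDisjoint_cut (hij : i < j) :
    (U.cut i j : Set (Finset α)).PairwiseDisjoint id := by
  rw [cut, coe_pair]
  exact Set.pairwise_pair.2 fun _ =>
    ⟨disjoint_filter_le_filter_ge hij, (disjoint_filter_le_filter_ge hij).symm⟩

lemma empty_notMem_cut (hi : i ∈ U) (hj : j ∈ U) : ∅ ∉ U.cut i j := by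
  simp only [cut, mem_insert, mem_singleton, not_or, eq_comm (a := ∅),
    ← not_nonempty_iff_eq_empty, not_not]
  exact ⟨⟨i, mem_filter.2 ⟨hi, le_rfl⟩⟩, ⟨j, mem_filter.2 ⟨hj, le_rfl⟩⟩⟩

lemma sup_cut (h : ∀ z ∈ U, z ≤ i ∨ j ≤ z) : (U.cut i j).sup id = U := by
  rw [cut, sup_insert, sup_singleton, id, id, sup_eq_union, filter_union_filter_of_le_or_le h]

lemma card_cut (hij : i < j) (hi : i ∈ U) : #(U.cut i j) = 2 := by
  refine card_pair fun h => ?_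
  have hi' : i ∈ U.filter (j ≤ ·) := h ▸ mem_filter.2 ⟨hi, le_rfl⟩
  exact (mem_filter.1 hi').2.not_gt hij

end Finset

namespace Finpartition

section ChainPartition

variable {α : Type*} [LinearOrder α] {s : Finset α} {r : α → α → Prop} {P : Finpartition s}

def IsChainPartition (r : α → α → Prop) (P : Finpartition s) : Prop :=
  ∀ p ∈ P.parts, p.IsSuccChain r

lemma IsChainPartition.replace (hP : P.IsChainPartition r) {old new : Finset (Finset α)}
    (hnew : ∀ t ∈ new, t.IsSuccChain r) : (P.replace old new).IsChainPartition r := by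
  by_cases h : P.CanReplace old new
  · intro t ht
    rcases mem_union.1 (parts_replace h ▸ ht) with ht | ht
    exacts [hP t (mem_sdiff.1 ht).1, hnew t ht]
  · rwa [Finpartition.replace, dif_neg h]

lemma isChainPartition_bot : (⊥ : Finpartition s).IsChainPartition r := by
  intro p hp x hx y hy hxy _
  obtain ⟨a, -, rfl⟩ := mem_bot_iff.1 hp
  exact absurd ((mem_singleton.1 hx).trans (mem_singleton.1 hy).symm) hxy.ne

lemma IsChainPartition.eq_bot (hP : P.IsChainPartition r) (h : ∀ x y, x < y → ¬ r x y) :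
    P = ⊥ := by
  have hsub : ∀ p ∈ P.parts, ∀ x ∈ p, ∀ y ∈ p, ¬ x < y := fun p hp x hx y hy hxy => by
    obtain ⟨m, -, hxm, -, hrm⟩ := (hP p hp).exists_next hx hy hxy
    exact h x m hxm hrm
  refine le_bot_iff.1 fun p hp => ?_
  obtain ⟨x, hx⟩ := P.nonempty_of_mem_parts hp
  have hpx : p = {x} := eq_singleton_iff_unique_mem.2 ⟨hx, fun y hy =>
    le_antisymm (not_lt.1 (hsub p hp x hx y hy)) (not_lt.1 (hsub p hp y hy x hx))⟩
  exact ⟨p, mem_bot_iff.2 ⟨x, P.le hp hx, hpx.symm⟩, le_rfl⟩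

end ChainPartition

section Toggle

variable {α : Type*} [Fintype α] [LinearOrder α] {r : α → α → Prop}
  {P : Finpartition (univ : Finset α)} {i j : α}

lemma part_mem_parts (P : Finpartition (univ : Finset α)) (a : α) : P.part a ∈ P.parts :=
  P.part_mem.2 (mem_univ a)

lemma self_mem_part (P : Finpartition (univ : Finset α)) (a : α) : a ∈ P.part a :=
  P.mem_part_self.2 (mem_univ a)

lemma IsChainPartition.le_or_le_of_mem_part_left (hP : P.IsChainPartition r)
    (hr : Relator.RightUnique r) (hij : r i j) {z : α} (hz : z ∈ P.part i) :
    z ≤ i ∨ (j ∈ P.part i ∧ j ≤ z) := by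
  refine (le_or_gt z i).imp_right fun hiz => ?_
  obtain ⟨m, hm, -, hmz, him⟩ :=
    (hP _ (P.part_mem_parts i)).exists_next (P.self_mem_part i) hz hiz
  obtain rfl := hr hij him
  exact ⟨hm, hmz⟩

lemma IsChainPartition.le_or_le_of_mem_part_right (hP : P.IsChainPartition r)
    (hl : Relator.LeftUnique r) (hij : r i j) {z : α} (hz : z ∈ P.part j) :
    j ≤ z ∨ (i ∈ P.part j ∧ z ≤ i) := by
  refine (le_or_gt j z).imp_right fun hzj => ?_
  obtain ⟨m, hm, hzm, -, hmj⟩ :=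
    (hP _ (P.part_mem_parts j)).exists_prev hz (P.self_mem_part j) hzj
  obtain rfl := hl hij hmj
  exact ⟨hm, hzm⟩

lemma IsChainPartition.le_or_le_of_mem_union (hP : P.IsChainPartition r)
    (hl : Relator.LeftUnique r) (hr : Relator.RightUnique r) (hij : r i j) {z : α}
    (hz : z ∈ P.part i ∪ P.part j) : z ≤ i ∨ j ≤ z := by
  rcases mem_union.1 hz with hz | hz
  · exact (hP.le_or_le_of_mem_part_left hr hij hz).imp_right And.right
  · exact ((hP.le_or_le_of_mem_part_right hl hij hz).imp_right And.right).symm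

lemma IsChainPartition.le_of_mem_part_left (hP : P.IsChainPartition r)
    (hr : Relator.RightUnique r) (hij : r i j) (hs : j ∉ P.part i) {z : α}
    (hz : z ∈ P.part i) : z ≤ i :=
  (hP.le_or_le_of_mem_part_left hr hij hz).resolve_right fun h => hs h.1

lemma IsChainPartition.le_of_mem_part_right (hP : P.IsChainPartition r)
    (hl : Relator.LeftUnique r) (hij : r i j) (hs : j ∉ P.part i) {z : α}
    (hz : z ∈ P.part j) : j ≤ z :=
  (hP.le_or_le_of_mem_part_right hl hij hz).resolve_right fun h =>
    hs (P.part_eq_of_mem (P.part_mem_parts j) h.1 ▸ P.self_mem_part j)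

lemma IsChainPartition.cut_eq (hP : P.IsChainPartition r) (hl : Relator.LeftUnique r)
    (hr : Relator.RightUnique r) (hlt : i < j) (hij : r i j) (hs : j ∉ P.part i) :
    (P.part i ∪ P.part j).cut i j = {P.part i, P.part j} := by
  have hi (z) (hz : z ∈ P.part i) : z ≤ i := hP.le_of_mem_part_left hr hij hs hz
  have hj (z) (hz : z ∈ P.part j) : j ≤ z := hP.le_of_mem_part_right hl hij hs hz
  rw [cut, filter_union, filter_union, filter_true_of_mem hi, filter_true_of_mem hj,
    filter_false_of_mem fun z hz => (hlt.trans_le (hj z hz)).not_ge,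
    filter_false_of_mem fun z hz => ((hi z hz).trans_lt hlt).not_ge, union_empty, empty_union]

/-- The sign-reversing involution on chain partitions of an edge `r i j` with `i < j`. -/
noncomputable def toggle (i j : α) (P : Finpartition (univ : Finset α)) :
    Finpartition (univ : Finset α) :=
  if j ∈ P.part i then P.replace {P.part i ∪ P.part j} ((P.part i ∪ P.part j).cut i j)
  else P.replace ((P.part i ∪ P.part j).cut i j) {P.part i ∪ P.part j}

lemma toggle_of_mem (hs : j ∈ P.part i) :
    toggle i j P = P.replace {P.part i ∪ P.part j} ((P.part i ∪ P.part j).cut i j) :=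
  if_pos hs

lemma toggle_of_notMem (hs : j ∉ P.part i) :
    toggle i j P = P.replace ((P.part i ∪ P.part j).cut i j) {P.part i ∪ P.part j} :=
  if_neg hs

lemma IsChainPartition.canReplace_cut (hP : P.IsChainPartition r) (hl : Relator.LeftUnique r)
    (hr : Relator.RightUnique r) (hlt : i < j) (hij : r i j) (hs : j ∈ P.part i) :
    P.CanReplace {P.part i ∪ P.part j} ((P.part i ∪ P.part j).cut i j) := by
  have hU : P.part i ∪ P.part j = P.part i := by
    rw [P.part_eq_of_mem (P.part_mem_parts i) hs, union_self]
  have hsplit (z) (hz : z ∈ P.part i) : z ≤ i ∨ j ≤ z :=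
    hP.le_or_le_of_mem_union hl hr hij (mem_union_left _ hz)
  rw [hU]
  refine ⟨singleton_subset_iff.2 (P.part_mem_parts i), pairwiseDisjoint_cut hlt,
    empty_notMem_cut (P.self_mem_part i) hs, ?_⟩
  rw [sup_cut hsplit, sup_singleton, id]

lemma IsChainPartition.canReplace_merge (hP : P.IsChainPartition r) (hl : Relator.LeftUnique r)
    (hr : Relator.RightUnique r) (hlt : i < j) (hij : r i j) (hs : j ∉ P.part i) :
    P.CanReplace ((P.part i ∪ P.part j).cut i j) {P.part i ∪ P.part j} := by
  rw [hP.cut_eq hl hr hlt hij hs]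
  refine ⟨insert_subset (P.part_mem_parts i) (singleton_subset_iff.2 (P.part_mem_parts j)),
    coe_singleton (α := Finset α) _ ▸ Set.pairwiseDisjoint_singleton _ _, ?_, ?_⟩
  · exact notMem_singleton.2 fun h => notMem_empty i (h ▸ mem_union_left _ (P.self_mem_part i))
  · simp only [sup_singleton, sup_insert, id, sup_eq_union]

lemma IsChainPartition.part_toggle_of_mem (hP : P.IsChainPartition r)
    (hl : Relator.LeftUnique r) (hr : Relator.RightUnique r) (hlt : i < j) (hij : r i j)
    (hs : j ∈ P.part i) :
    (toggle i j P).part i = (P.part i ∪ P.part j).filter (· ≤ i) ∧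
      (toggle i j P).part j = (P.part i ∪ P.part j).filter (j ≤ ·) := by
  have h := hP.canReplace_cut hl hr hlt hij hs
  rw [toggle_of_mem hs]
  exact ⟨part_replace_of_mem h (by simp [cut])
      (mem_filter.2 ⟨mem_union_left _ (P.self_mem_part i), le_rfl⟩),
    part_replace_of_mem h (by simp [cut])
      (mem_filter.2 ⟨mem_union_right _ (P.self_mem_part j), le_rfl⟩)⟩

lemma IsChainPartition.part_toggle_of_notMem (hP : P.IsChainPartition r)
    (hl : Relator.LeftUnique r) (hr : Relator.RightUnique r) (hlt : i < j) (hij : r i j)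
    (hs : j ∉ P.part i) :
    (toggle i j P).part i = P.part i ∪ P.part j ∧
      (toggle i j P).part j = P.part i ∪ P.part j := by
  have h := hP.canReplace_merge hl hr hlt hij hs
  rw [toggle_of_notMem hs]
  exact ⟨part_replace_of_mem h (mem_singleton_self _) (mem_union_left _ (P.self_mem_part i)),
    part_replace_of_mem h (mem_singleton_self _) (mem_union_right _ (P.self_mem_part j))⟩

lemma IsChainPartition.part_union_part_toggle (hP : P.IsChainPartition r)
    (hl : Relator.LeftUnique r) (hr : Relator.RightUnique r) (hlt : i < j) (hij : r i j) :
    (toggle i j P).part i ∪ (toggle i j P).part j = P.part i ∪ P.part j := by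
  by_cases hs : j ∈ P.part i
  · obtain ⟨hi, hj⟩ := hP.part_toggle_of_mem hl hr hlt hij hs
    rw [hi, hj, filter_union_filter_of_le_or_le fun z hz => hP.le_or_le_of_mem_union hl hr hij hz]
  · obtain ⟨hi, hj⟩ := hP.part_toggle_of_notMem hl hr hlt hij hs
    rw [hi, hj, union_self]

lemma IsChainPartition.mem_part_toggle_iff (hP : P.IsChainPartition r)
    (hl : Relator.LeftUnique r) (hr : Relator.RightUnique r) (hlt : i < j) (hij : r i j) :
    j ∈ (toggle i j P).part i ↔ j ∉ P.part i := by
  by_cases hs : j ∈ P.part i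
  · rw [(hP.part_toggle_of_mem hl hr hlt hij hs).1, mem_filter]
    simp [hs, not_le.2 hlt]
  · rw [(hP.part_toggle_of_notMem hl hr hlt hij hs).1]
    simp [hs, P.self_mem_part j]

lemma IsChainPartition.toggle_toggle (hP : P.IsChainPartition r)
    (hl : Relator.LeftUnique r) (hr : Relator.RightUnique r) (hlt : i < j) (hij : r i j) :
    toggle i j (toggle i j P) = P := by
  have hU := hP.part_union_part_toggle hl hr hlt hij
  by_cases hs : j ∈ P.part i
  · rw [toggle_of_notMem ((hP.mem_part_toggle_iff hl hr hlt hij).not.2 (not_not.2 hs)), hU,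
      toggle_of_mem hs]
    exact replace_replace (hP.canReplace_cut hl hr hlt hij hs)
  · rw [toggle_of_mem ((hP.mem_part_toggle_iff hl hr hlt hij).2 hs), hU, toggle_of_notMem hs]
    exact replace_replace (hP.canReplace_merge hl hr hlt hij hs)

lemma IsChainPartition.neg_one_pow_card_toggle (hP : P.IsChainPartition r)
    (hl : Relator.LeftUnique r) (hr : Relator.RightUnique r) (hlt : i < j) (hij : r i j) :
    (-1 : ℤ) ^ #(toggle i j P).parts = -(-1) ^ #P.parts := by
  by_cases hs : j ∈ P.part i
  · have h := card_replace (hP.canReplace_cut hl hr hlt hij hs)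
    rw [card_singleton, card_cut hlt (mem_union_left _ (P.self_mem_part i)),
      ← toggle_of_mem hs] at h
    rw [show #(toggle i j P).parts = #P.parts + 1 by omega, pow_succ, mul_neg_one]
  · have h := card_replace (hP.canReplace_merge hl hr hlt hij hs)
    rw [card_singleton, card_cut hlt (mem_union_left _ (P.self_mem_part i)),
      ← toggle_of_notMem hs] at h
    rw [show #P.parts = #(toggle i j P).parts + 1 by omega, pow_succ, mul_neg_one, neg_neg]

lemma IsChainPartition.toggle (hP : P.IsChainPartition r)
    (hl : Relator.LeftUnique r) (hr : Relator.RightUnique r) (hlt : i < j) (hij : r i j) :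
    (toggle i j P).IsChainPartition r := by
  by_cases hs : j ∈ P.part i
  · have hU : P.part i ∪ P.part j = P.part i := by
      rw [P.part_eq_of_mem (P.part_mem_parts i) hs, union_self]
    rw [toggle_of_mem hs]
    refine hP.replace fun t ht => ?_
    rw [hU, cut, mem_insert, mem_singleton] at ht
    have hc := hP _ (P.part_mem_parts i)
    rcases ht with rfl | rfl
    · exact hc.mono (filter_subset _ _) fun x hx y hy z hz _ hzy =>
        mem_filter.2 ⟨hz, hzy.le.trans (mem_filter.1 hy).2⟩
    · exact hc.mono (filter_subset _ _) fun x hx y hy z hz hxz _ =>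
        mem_filter.2 ⟨hz, (mem_filter.1 hx).2.trans hxz.le⟩
  · rw [toggle_of_notMem hs]
    refine hP.replace fun t ht => ?_
    rw [mem_singleton.1 ht]
    exact (hP _ (P.part_mem_parts i)).union (hP _ (P.part_mem_parts j)) (P.self_mem_part i)
      (P.self_mem_part j) (fun z => hP.le_of_mem_part_left hr hij hs)
      (fun z => hP.le_of_mem_part_right hl hij hs) hlt hij

open scoped Classical in
theorem sum_isChainPartition_neg_one_pow (hl : Relator.LeftUnique r)
    (hr : Relator.RightUnique r) :
    ∑ P : Finpartition (univ : Finset α) with P.IsChainPartition r,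
        (-1 : ℤ) ^ (#P.parts + Fintype.card α) =
      if ∀ i j : α, i < j → ¬ r i j then 1 else 0 := by
  split_ifs with h
  · have hbot : univ.filter (IsChainPartition r) = {(⊥ : Finpartition (univ : Finset α))} := by
      ext P
      simp only [mem_filter, mem_univ, true_and, mem_singleton]
      exact ⟨fun hP => hP.eq_bot h, fun hP => hP ▸ isChainPartition_bot⟩
    rw [hbot, sum_singleton, card_bot, card_univ, ← two_mul, pow_mul, neg_one_sq, one_pow]
  · push Not at h
    obtain ⟨i, j, hlt, hij⟩ := h
    have hmem {P : Finpartition (univ : Finset α)} (hP : P ∈ univ.filter (IsChainPartition r)) :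
        P.IsChainPartition r :=
      (mem_filter.1 hP).2
    refine sum_involution (fun P _ => toggle i j P) (fun P hP => ?_) (fun P hP _ => ?_)
      (fun P hP => mem_filter.2 ⟨mem_univ _, (hmem hP).toggle hl hr hlt hij⟩)
      (fun P hP => (hmem hP).toggle_toggle hl hr hlt hij)
    · rw [pow_add, pow_add, (hmem hP).neg_one_pow_card_toggle hl hr hlt hij]
      ring
    · intro he
      have h := (hmem hP).neg_one_pow_card_toggle hl hr hlt hij
      rw [he] at h
      exact pow_ne_zero _ (by norm_num) (by linarith : (-1 : ℤ) ^ #P.parts = 0)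

end Toggle

end Finpartition

lemma lastFirstAdj_rightUnique {n T : ℕ} (w : Fin T → Fin n) :
    Relator.RightUnique (LastFirstAdj w) := by
  rintro i j j' ⟨s, t, hsi, htj, hts, hmax, -⟩ ⟨s', t', hsi', htj', hts', hmax', -⟩
  obtain rfl : s = s' := le_antisymm (hmax' s hsi) (hmax s' hsi')
  rw [← htj, ← htj', Fin.ext (hts.trans hts'.symm)]

lemma lastFirstAdj_leftUnique {n T : ℕ} (w : Fin T → Fin n) :
    Relator.LeftUnique (LastFirstAdj w) := by
  rintro i i' j ⟨s, t, hsi, htj, hts, -, hmin⟩ ⟨s', t', hsi', htj', hts', -, hmin'⟩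
  obtain rfl : t = t' := le_antisymm (hmin t' htj') (hmin' t htj)
  rw [← hsi, ← hsi', Fin.ext (by omega : (s : ℕ) = s')]

open scoped Classical in
/-- inclusion–exclusion for failure set partitions.  For words with
`σ_i + 1` symbols of kind `i` (for `i ∈ Fin n`, with its total order), the signed sum
over set partitions `P` of `Fin n` of `(-1)^{|P| + n}` times the number of words in
which, for every block `p = {p_1 < ⋯ < p_k}` of `P`, the last symbol of kind `p_m` is
immediately followed by the first symbol of kind `p_{m+1}` for each `m`, equals the
number of words whose failure set partition is discrete, i.e. in which the last symbol
of a kind `i` is never immediately followed by the first symbol of a kind `j > i`. -/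
theorem signed_sum_counts_discrete_failures (n : ℕ) (σ : Fin n → ℕ) :
    (∑ P : Finpartition (Finset.univ : Finset (Fin n)),
        (-1 : ℤ) ^ (P.parts.card + n) *
          (Finset.univ.filter (fun w : Fin (∑ i, (σ i + 1)) → Fin n =>
            (∀ i : Fin n, (Finset.univ.filter (fun t => w t = i)).card = σ i + 1) ∧
            (∀ p ∈ P.parts, ∀ x ∈ p, ∀ y ∈ p, x < y →
              (∀ z ∈ p, ¬(x < z ∧ z < y)) → LastFirstAdj w x y))).card) =
      ((Finset.univ.filter (fun w : Fin (∑ i, (σ i + 1)) → Fin n =>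
          (∀ i : Fin n, (Finset.univ.filter (fun t => w t = i)).card = σ i + 1) ∧
          (∀ i j : Fin n, i < j → ¬ LastFirstAdj w i j))).card : ℤ) := by
  set W := univ.filter fun w : Fin (∑ i, (σ i + 1)) → Fin n =>
    ∀ i : Fin n, (univ.filter (fun t => w t = i)).card = σ i + 1
  calc _ = ∑ w ∈ W, ∑ P : Finpartition (univ : Finset (Fin n)) with
          P.IsChainPartition (LastFirstAdj w), (-1 : ℤ) ^ (#P.parts + Fintype.card (Fin n)) := by
        simp only [← filter_filter, natCast_card_filter, mul_sum]
        rw [sum_comm]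
        refine sum_congr rfl fun w _ => ?_
        rw [sum_filter, Fintype.card_fin]
        simp only [mul_ite, mul_one, mul_zero]
        exact sum_congr rfl fun P _ => if_congr Iff.rfl rfl rfl
    _ = ∑ w ∈ W, if ∀ i j : Fin n, i < j → ¬ LastFirstAdj w i j then 1 else 0 :=
        sum_congr rfl fun w _ => by
          convert Finpartition.sum_isChainPartition_neg_one_pow
            (lastFirstAdj_leftUnique w) (lastFirstAdj_rightUnique w)
    _ = _ := by rw [← filter_filter, natCast_card_filter]
end
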